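/- arXiv:2302.06334 — 3 statements merged into one kernel-verified Lean document; each statement's English description precedes it below -/
import Mathlib

section
/- Let δ : ]0,∞[ → ℝ be continuous, nonnegative, bounded, continuously differentiable with lim_{r→0⁺} √r δ'(r) = 0, so that u ↦ δ(u²) is C¹ on ℝ. Let (u,E) : ]A,0] → ℝ² be a solution of the Levi-Civita system u'' + δ(u²)u²u' = Eu/2, E' = -4δ(u²)(u')² on the invariant manifold 2(u')² - Eu² = 1, maximal to the left. If A > -∞, then there exists s₁ ∈ ]A,0] such that u'(s)u(s) < 0 for all s ∈ ]A,s₁]. -/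
open Set Filter

/-- Solutions of the Levi-Civita system `u'' + δ(u²)u²u' = Eu/2`, `E' = -4δ(u²)(u')²`
on a set `S` of (regularized) times. -/
def LCSolOn (δ : ℝ → ℝ) (S : Set ℝ) (u u' E : ℝ → ℝ) : Prop :=
  (∀ s ∈ S, HasDerivWithinAt u (u' s) S s) ∧
  (∀ s ∈ S, HasDerivWithinAt u' (E s * u s / 2 - δ ((u s) ^ 2) * (u s) ^ 2 * u' s) S s) ∧
  (∀ s ∈ S, HasDerivWithinAt E (-4 * δ ((u s) ^ 2) * (u' s) ^ 2) S s)

private lemma abs_le_of_sq_le' {x m : ℝ} (hm : 1 ≤ m) (h : x^2 ≤ m) : |x| ≤ m := by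
  nlinarith [sq_abs x, abs_nonneg x]

private lemma mono_Icc' {a b : ℝ} (hab : a ≤ b) (f f' : ℝ → ℝ)
    (hf : ∀ s ∈ Icc a b, HasDerivWithinAt f (f' s) (Icc a b) s)
    (h0 : ∀ s ∈ Icc a b, 0 ≤ f' s) : f a ≤ f b := by
  have hm : MonotoneOn f (Icc a b) :=
    monotoneOn_of_hasDerivWithinAt_nonneg (convex_Icc a b)
      (fun s hs => (hf s hs).continuousWithinAt)
      (fun s hs => ((hf s (interior_subset hs)).hasDerivAt
        (by rw [interior_Icc] at hs; exact Icc_mem_nhds hs.1 hs.2)).hasDerivWithinAt)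
      (fun s hs => h0 s (interior_subset hs))
  exact hm ⟨le_rfl, hab⟩ ⟨hab, le_rfl⟩ hab

private lemma gronwall_aux' {a b k : ℝ} (hab : a ≤ b) (h h' : ℝ → ℝ)
    (hh : ∀ s ∈ Icc a b, HasDerivWithinAt h (h' s) (Icc a b) s)
    (key : ∀ s ∈ Icc a b, 0 ≤ k * h s + h' s) :
    Real.exp (k*a) * h a ≤ Real.exp (k*b) * h b := by
  have hd : ∀ s ∈ Icc a b, HasDerivWithinAt (fun t => Real.exp (k*t) * h t)
      (Real.exp (k*s) * k * h s + Real.exp (k*s) * h' s) (Icc a b) s := by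
    intro s hs
    have he : HasDerivWithinAt (fun t => Real.exp (k*t)) (Real.exp (k*s) * k) (Icc a b) s := by
      simpa using (((hasDerivWithinAt_id s (Icc a b)).const_mul k).exp)
    exact he.mul (hh s hs)
  exact mono_Icc' hab _ _ hd (fun s hs => by
    have h2 : Real.exp (k*s) * k * h s + Real.exp (k*s) * h' s
        = Real.exp (k*s) * (k * h s + h' s) := by ring
    rw [h2]; exact mul_nonneg (Real.exp_pos _).le (key s hs))

/-- Extension lemma: a bounded solution on `Ioc A 0` extends to `Ioc B 0` for some `B < A`. -/
lemma lc_ext (δ : ℝ → ℝ) (hsq : ContDiff ℝ 1 fun v : ℝ => δ (v ^ 2))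
    (A : ℝ) (hA : A < 0) (u u' W : ℝ → ℝ)
    (hsol : LCSolOn δ (Ioc A 0) u u' W) (M : ℝ)
    (hM : ∀ s ∈ Ioc A 0, |u s| ≤ M ∧ |u' s| ≤ M ∧ |W s| ≤ M) :
    ∃ (B : ℝ) (q q' F : ℝ → ℝ), B < A ∧ LCSolOn δ (Ioc B 0) q q' F ∧
      ∀ s ∈ Ioc A 0, q s = u s ∧ q' s = u' s ∧ F s = W s := by
  have hM0 : 0 ≤ M := le_trans (abs_nonneg _) (hM 0 ⟨hA, le_refl 0⟩).1
  set g : ℝ → ℝ := fun v => δ (v ^ 2) with hg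
  set Fv : ℝ × ℝ × ℝ → ℝ × ℝ × ℝ := fun p =>
    (p.2.1, p.2.2 * p.1 / 2 - g p.1 * p.1 ^ 2 * p.2.1, -4 * g p.1 * p.2.1 ^ 2) with hFv
  have h1 : ContDiff ℝ 1 (fun p : ℝ × ℝ × ℝ => p.1) := contDiff_fst
  have h2 : ContDiff ℝ 1 (fun p : ℝ × ℝ × ℝ => p.2.1) := contDiff_fst.comp contDiff_snd
  have h3 : ContDiff ℝ 1 (fun p : ℝ × ℝ × ℝ => p.2.2) := contDiff_snd.comp contDiff_snd
  have hgc : ContDiff ℝ 1 (fun p : ℝ × ℝ × ℝ => g p.1) := hsq.comp h1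
  have hFc : ContDiff ℝ 1 Fv :=
    h2.prodMk ((((h3.mul h1).div_const 2).sub ((hgc.mul (h1.pow 2)).mul h2)).prodMk
      ((contDiff_const.mul hgc).mul (h2.pow 2)))
  set φ : ContDiffBump (0:ℝ) := ⟨M+1, M+2, by linarith, by linarith⟩ with hφ
  set χ : ℝ × ℝ × ℝ → ℝ := fun p => φ p.1 * (φ p.2.1 * φ p.2.2) with hχ
  have hχc : ContDiff ℝ 1 χ :=
    (φ.contDiff.comp h1).mul ((φ.contDiff.comp h2).mul (φ.contDiff.comp h3))
  set Ft : ℝ × ℝ × ℝ → ℝ × ℝ × ℝ := fun p => χ p • Fv p with hFt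
  have hFtc : ContDiff ℝ 1 Ft := hχc.smul hFc
  have hsupp : HasCompactSupport Ft := by
    apply HasCompactSupport.intro
      (K := Icc (-(M+2)) (M+2) ×ˢ (Icc (-(M+2)) (M+2) ×ˢ Icc (-(M+2)) (M+2)))
      (isCompact_Icc.prod (isCompact_Icc.prod isCompact_Icc))
    intro p hp
    have hz : χ p = 0 := by
      simp only [Set.mem_prod, Set.mem_Icc, not_and_or] at hp
      have habs : M + 2 ≤ |p.1| ∨ M + 2 ≤ |p.2.1| ∨ M + 2 ≤ |p.2.2| := by
        rcases hp with h | h | h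
        · left; by_contra hc; push_neg at hc; rw [abs_lt] at hc
          exact (by push_neg at h; rcases h with h | h <;> linarith [hc.1, hc.2] : False)
        · right; left; by_contra hc; push_neg at hc; rw [abs_lt] at hc
          exact (by push_neg at h; rcases h with h | h <;> linarith [hc.1, hc.2] : False)
        · right; right; by_contra hc; push_neg at hc; rw [abs_lt] at hc
          exact (by push_neg at h; rcases h with h | h <;> linarith [hc.1, hc.2] : False)
      rcases habs with h | h | h
      · have : φ p.1 = 0 := φ.zero_of_le_dist (by simpa [Real.dist_eq] using h)
        simp [hχ, this]
      · have : φ p.2.1 = 0 := φ.zero_of_le_dist (by simpa [Real.dist_eq] using h)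
        simp [hχ, this]
      · have : φ p.2.2 = 0 := φ.zero_of_le_dist (by simpa [Real.dist_eq] using h)
        simp [hχ, this]
    show χ p • Fv p = 0
    rw [hz, zero_smul]
  obtain ⟨L, hL⟩ := ContDiff.lipschitzWith_of_hasCompactSupport hsupp hFtc one_ne_zero
  obtain ⟨p₀, hp₀⟩ := Continuous.exists_forall_ge_of_hasCompactSupport
    (hFtc.continuous.norm) hsupp.norm
  obtain ⟨C', hC'⟩ : ∃ x : ℝ, x = ‖Ft p₀‖ := ⟨_, rfl⟩
  have hC'0 : 0 ≤ C' := hC' ▸ norm_nonneg _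
  have hp₀' : ∀ y, ‖Ft y‖ ≤ C' := by rw [hC']; exact hp₀
  obtain ⟨C, hCdef⟩ : ∃ x : ℝ, x = C' + 1 := ⟨_, rfl⟩
  have hC0 : 0 < C := by rw [hCdef]; linarith
  obtain ⟨B, hBdef⟩ : ∃ x : ℝ, x = A - 1/C := ⟨_, rfl⟩
  have h1C : 0 < 1/C := by positivity
  have hBA : B < A := by rw [hBdef]; linarith
  have hB0 : B < 0 := by rw [hBdef]; linarith
  have hPL : IsPicardLindelof (fun _ => Ft) (tmin := B) (tmax := 0) ⟨0, hB0.le, le_rfl⟩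
      (u 0, u' 0, W 0) ⟨C * (0 - B), by nlinarith⟩ 0 ⟨C, hC0.le⟩ L := by
    refine IsPicardLindelof.of_time_independent
      (fun x _ => le_trans (hp₀' x) (by show C' ≤ C; rw [hCdef]; linarith)) hL.lipschitzOnWith ?_
    show C * max (0 - (0:ℝ)) (0 - B) ≤ C * (0 - B) - ((0:NNReal):ℝ)
    have hmax : max (0 - (0:ℝ)) (0 - B) = 0 - B := max_eq_right (by linarith)
    rw [hmax, NNReal.coe_zero, sub_zero]
  obtain ⟨f, hf0, hfd⟩ := hPL.exists_eq_forall_mem_Icc_hasDerivWithinAt₀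
  set p : ℝ → ℝ × ℝ × ℝ := fun t => (u t, u' t, W t) with hpdef
  have hp : ∀ t ∈ Ioc A 0, HasDerivWithinAt p (Fv (p t)) (Ioc A 0) t := fun t ht =>
    (hsol.1 t ht).prodMk ((hsol.2.1 t ht).prodMk (hsol.2.2 t ht))
  have hpnorm : ∀ t ∈ Ioc A 0, ‖p t‖ ≤ M := by
    intro t ht
    rw [Prod.norm_def, Prod.norm_def]
    exact max_le (by simpa [Real.norm_eq_abs] using (hM t ht).1)
      (max_le (by simpa [Real.norm_eq_abs] using (hM t ht).2.1)
        (by simpa [Real.norm_eq_abs] using (hM t ht).2.2))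
  have hcut : ∀ x : ℝ × ℝ × ℝ, ‖x‖ ≤ M + 1 → Ft x = Fv x := by
    intro x hx
    have e1 : φ x.1 = 1 := φ.one_of_mem_closedBall
      (by rw [mem_closedBall_zero_iff]; exact (norm_fst_le x).trans hx)
    have e2 : φ x.2.1 = 1 := φ.one_of_mem_closedBall
      (by rw [mem_closedBall_zero_iff]; exact ((norm_fst_le x.2).trans (norm_snd_le x)).trans hx)
    have e3 : φ x.2.2 = 1 := φ.one_of_mem_closedBall
      (by rw [mem_closedBall_zero_iff]; exact ((norm_snd_le x.2).trans (norm_snd_le x)).trans hx)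
    show χ x • Fv x = Fv x
    have : χ x = 1 := by rw [hχ]; simp [e1, e2, e3]
    rw [this, one_smul]
  have hfu : ∀ s ∈ Ioc A 0, f s = p s := by
    intro s hs
    have hsub : Icc s 0 ⊆ Ioc A 0 := fun t ht => ⟨lt_of_lt_of_le hs.1 ht.1, ht.2⟩
    have hsub2 : Ioc s 0 ⊆ Ioc A 0 := fun t ht => ⟨lt_trans hs.1 ht.1, ht.2⟩
    have hsubB : Icc s 0 ⊆ Icc B 0 := Icc_subset_Icc (by rw [hBdef]; linarith [hs.1]) le_rfl
    have key := ODE_solution_unique_of_mem_Icc_left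
      (v := fun _ x => Ft x) (s := fun _ => (univ : Set (ℝ × ℝ × ℝ))) (K := L)
      (fun _ _ => hL.lipschitzOnWith)
      (f := p) (g := f) (a := s) (b := 0)
      (fun t ht => ((hp t (hsub ht)).continuousWithinAt).mono hsub)
      (by
        intro t ht
        have hmem : t ∈ Ioc A 0 := hsub2 ht
        have heq : Ft (p t) = Fv (p t) := hcut _ (le_trans (hpnorm t hmem) (by linarith))
        have goal : HasDerivWithinAt p (Ft (p t)) (Iic t) t := by
          rcases eq_or_lt_of_le ht.2 with h0 | hlt
          · rw [heq]
            refine (hp t hmem).mono_of_mem_nhdsWithin ?_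
            rw [h0, ← Ioi_inter_Iic]
            exact inter_mem (mem_nhdsWithin_of_mem_nhds (Ioi_mem_nhds hA)) self_mem_nhdsWithin
          · rw [heq]
            exact ((hp t hmem).hasDerivAt (Ioc_mem_nhds hmem.1 hlt)).hasDerivWithinAt
        exact goal)
      (fun _ _ => mem_univ _)
      (fun t ht => ((hfd t (hsubB ht)).continuousWithinAt).mono hsubB)
      (by
        intro t ht
        have hmemB : t ∈ Icc B 0 := hsubB ⟨ht.1.le, ht.2⟩
        have goal : HasDerivWithinAt f (Ft (f t)) (Iic t) t := by
          rcases eq_or_lt_of_le ht.2 with h0 | hlt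
          · refine (hfd t hmemB).mono_of_mem_nhdsWithin ?_
            rw [h0, ← Ici_inter_Iic]
            exact inter_mem (mem_nhdsWithin_of_mem_nhds (Ici_mem_nhds hB0)) self_mem_nhdsWithin
          · exact ((hfd t hmemB).hasDerivAt
              (Icc_mem_nhds (by rw [hBdef] at hmemB ⊢; linarith [hs.1, ht.1, hmemB.1]) hlt)).hasDerivWithinAt
        exact goal)
      (fun _ _ => mem_univ _)
      hf0.symm
    exact (key ⟨le_rfl, hs.2⟩).symm
  have hfA : ‖f A‖ ≤ M := by
    have hAmem : A ∈ Icc B 0 := ⟨by rw [hBdef]; linarith, hA.le⟩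
    have hcont : ContinuousWithinAt f (Icc B 0) A := (hfd A hAmem).continuousWithinAt
    have h2' : Tendsto f (nhdsWithin A (Ioo A 0)) (nhds (f A)) :=
      hcont.mono (fun t ht => ⟨by linarith [ht.1], ht.2.le⟩)
    have hne : (nhdsWithin A (Ioo A 0)).NeBot := by
      rw [nhdsWithin_Ioo_eq_nhdsGT hA]; infer_instance
    refine le_of_tendsto h2'.norm ?_
    filter_upwards [self_mem_nhdsWithin] with t ht
    rw [hfu t ⟨ht.1, ht.2.le⟩]
    exact hpnorm t ⟨ht.1, ht.2.le⟩
  have hfball : ∀ t ∈ Icc B 0, ‖f t‖ ≤ M + 1 := by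
    intro t ht
    rcases lt_or_ge A t with h | h
    · rw [hfu t ⟨h, ht.2⟩]; linarith [hpnorm t ⟨h, ht.2⟩]
    · have hlip : ‖f t - f A‖ ≤ C' * ‖t - A‖ :=
        Convex.norm_image_sub_le_of_norm_hasDerivWithin_le
          (f' := fun x => Ft (f x)) (fun x hx => hfd x hx) (fun x _ => hp₀' (f x))
          (convex_Icc B 0) ⟨by rw [hBdef]; linarith, hA.le⟩ ht
      have hnrm : ‖t - A‖ = A - t := by
        rw [Real.norm_eq_abs, abs_of_nonpos (by linarith)]; ring
      have htri : ‖f t‖ ≤ ‖f A‖ + ‖f t - f A‖ := by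
        have := norm_add_le (f A) (f t - f A)
        simpa using this
      have h6 : C' * (A - t) ≤ C' * (A - B) :=
        mul_le_mul_of_nonneg_left (by linarith [ht.1]) hC'0
      have h7 : C' * (A - B) ≤ 1 := by
        have hAB : A - B = 1/C := by rw [hBdef]; ring
        rw [hAB]
        rw [div_eq_mul_inv, ← mul_assoc]  -- C' * (1 * C⁻¹)
        have : C' * 1 * C⁻¹ = C' / C := by ring
        rw [this, div_le_one hC0, hCdef]
        linarith
      rw [hnrm] at hlip
      linarith
  have hfd' : ∀ t ∈ Icc B 0, HasDerivWithinAt f (Fv (f t)) (Icc B 0) t := by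
    intro t ht
    have := hfd t ht
    rwa [hcut _ (hfball t ht)] at this
  refine ⟨B, fun t => (f t).1, fun t => (f t).2.1, fun t => (f t).2.2, hBA, ⟨?_, ?_, ?_⟩, ?_⟩
  · intro s hs
    have h := (hfd' s (Ioc_subset_Icc_self hs)).mono Ioc_subset_Icc_self
    have := (ContinuousLinearMap.fst ℝ ℝ (ℝ × ℝ)).hasFDerivAt.comp_hasDerivWithinAt s h
    simpa [Function.comp_def, hFv] using this
  · intro s hs
    have h := (hfd' s (Ioc_subset_Icc_self hs)).mono Ioc_subset_Icc_self
    have hsnd := (ContinuousLinearMap.snd ℝ ℝ (ℝ × ℝ)).hasFDerivAt.comp_hasDerivWithinAt s h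
    have := (ContinuousLinearMap.fst ℝ ℝ ℝ).hasFDerivAt.comp_hasDerivWithinAt s hsnd
    simpa [Function.comp_def, hFv] using this
  · intro s hs
    have h := (hfd' s (Ioc_subset_Icc_self hs)).mono Ioc_subset_Icc_self
    have hsnd := (ContinuousLinearMap.snd ℝ ℝ (ℝ × ℝ)).hasFDerivAt.comp_hasDerivWithinAt s h
    have := (ContinuousLinearMap.snd ℝ ℝ ℝ).hasFDerivAt.comp_hasDerivWithinAt s hsnd
    simpa [Function.comp_def, hFv] using this
  · intro s hs
    exact ⟨by show (f s).1 = u s; rw [hfu s hs],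
      by show (f s).2.1 = u' s; rw [hfu s hs],
      by show (f s).2.2 = W s; rw [hfu s hs]⟩

/-- If a solution of the Levi-Civita system on the invariant manifold
`2(u')² - Eu² = 1`, maximal to the left, is defined on `]A,0]` with `A > -∞` finite,
then `u'u < 0` on some interval `]A,s₁]`. -/
theorem stmt17 (δ δ' : ℝ → ℝ) (hδc : ContinuousOn δ (Ioi 0))
    (hδd : ∀ s > (0 : ℝ), HasDerivAt δ (δ' s) s) (hδ'c : ContinuousOn δ' (Ioi 0))
    (hδ0 : ∀ s > (0 : ℝ), 0 ≤ δ s) (Dstar : ℝ) (hδb : ∀ s > (0 : ℝ), δ s ≤ Dstar)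
    (hδ'0 : Tendsto (fun s => Real.sqrt s * δ' s) (nhdsWithin 0 (Ioi 0)) (nhds 0))
    (hsq : ContDiff ℝ 1 fun v : ℝ => δ (v ^ 2))
    (A : ℝ) (hA : A < 0)
    (u u' E : ℝ → ℝ) (hsol : LCSolOn δ (Ioc A 0) u u' E)
    (hman : ∀ s ∈ Ioc A 0, 2 * (u' s) ^ 2 - E s * (u s) ^ 2 = 1)
    (hmax : ¬∃ (B : ℝ) (q q' F : ℝ → ℝ), B < A ∧ LCSolOn δ (Ioc B 0) q q' F ∧
      ∀ s ∈ Ioc A 0, q s = u s ∧ q' s = u' s ∧ F s = E s) :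
    ∃ s₁ ∈ Ioc A 0, ∀ s ∈ Ioc A s₁, u' s * u s < 0 := by
  classical
  by_contra hcon
  push_neg at hcon
  -- hcon : ∀ s₁ ∈ Ioc A 0, ∃ s ∈ Ioc A s₁, 0 ≤ u' s * u s
  have hδall : ∀ t : ℝ, 0 ≤ δ (t^2) ∧ δ (t^2) ≤ Dstar := by
    intro t
    rcases eq_or_ne t 0 with rfl | ht
    · have hcont : ContinuousAt (fun v : ℝ => δ (v^2)) 0 := hsq.continuous.continuousAt
      have hseq : Tendsto (fun n : ℕ => (1:ℝ)/(n+1)) atTop (nhds 0) :=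
        tendsto_one_div_add_atTop_nhds_zero_nat
      have h2 : Tendsto (fun n : ℕ => δ (((1:ℝ)/(n+1))^2)) atTop (nhds (δ ((0:ℝ)^2))) :=
        hcont.tendsto.comp hseq
      constructor
      · refine ge_of_tendsto h2 ?_
        filter_upwards with n
        exact hδ0 _ (by positivity)
      · refine le_of_tendsto h2 ?_
        filter_upwards with n
        exact hδb _ (by positivity)
    · have hpos : 0 < t^2 := by positivity
      exact ⟨hδ0 _ hpos, hδb _ hpos⟩
  have hDstar0 : 0 ≤ Dstar := le_trans (hδall 1).1 (hδall 1).2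
  have hanti : ∀ a ∈ Ioc A 0, ∀ b ∈ Ioc A 0, a ≤ b → E b ≤ E a := by
    intro a ha b hb hab
    have hIsub : Icc a b ⊆ Ioc A 0 := fun t ht => ⟨lt_of_lt_of_le ha.1 ht.1, le_trans ht.2 hb.2⟩
    have h1 := mono_Icc' hab (fun t => -E t) (fun t => -(-4 * δ ((u t)^2) * (u' t)^2))
      (fun s hs => ((hsol.2.2 s (hIsub hs)).mono hIsub).neg)
      (fun s hs => by
        show 0 ≤ -(-4 * δ ((u s)^2) * (u' s)^2)
        nlinarith [mul_nonneg (hδall (u s)).1 (sq_nonneg (u' s))])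
    linarith
  by_cases hbd : ∃ K : ℝ, ∀ s ∈ Ioc A 0, E s ≤ K
  · -- Case I : E bounded above ⇒ everything bounded ⇒ extension exists, contradiction
    obtain ⟨K, hK⟩ := hbd
    obtain ⟨K₁, hK₁⟩ : ∃ x : ℝ, x = max K |E 0| := ⟨_, rfl⟩
    have hK₁0 : 0 ≤ K₁ := by rw [hK₁]; exact le_trans (abs_nonneg _) (le_max_right _ _)
    have hEb : ∀ s ∈ Ioc A 0, |E s| ≤ K₁ := by
      intro s hs
      have h1 : E s ≤ K := hK s hs
      have h2 : E 0 ≤ E s := hanti s hs 0 ⟨hA, le_rfl⟩ hs.2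
      rw [hK₁, abs_le]
      constructor
      · have := neg_abs_le (E 0)
        have := le_max_right K |E 0|
        linarith
      · exact le_trans h1 (le_max_left _ _)
    obtain ⟨C, hC⟩ : ∃ x : ℝ, x = 1 + K₁ := ⟨_, rfl⟩
    have hC1 : 1 ≤ C := by rw [hC]; linarith
    have husq : ∀ s ∈ Ioc A 0, u s ^ 2 ≤ (1 + u 0 ^ 2) * Real.exp (C * (-A)) := by
      intro s hs
      have hIsub : Icc s 0 ⊆ Ioc A 0 := fun t ht => ⟨lt_of_lt_of_le hs.1 ht.1, ht.2⟩
      have h1 := gronwall_aux' (k := C) hs.2 (fun t => 1 + u t ^ 2)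
        (fun t => 2 * u t ^ 1 * u' t)
        (fun t ht => by
          simpa using (((hsol.1 t (hIsub ht)).mono hIsub).pow 2).const_add 1)
        (fun t ht => by
          show 0 ≤ C * (1 + u t ^ 2) + 2 * u t ^ 1 * u' t
          have hmant := hman t (hIsub ht)
          have hEt := hEb t (hIsub ht)
          have h3 : E t * u t ^ 2 ≤ K₁ * u t ^ 2 :=
            mul_le_mul_of_nonneg_right (le_trans (le_abs_self _) hEt) (sq_nonneg _)
          rw [hC]
          nlinarith [sq_nonneg (u t + u' t), sq_nonneg (u t)])
      simp only [mul_zero, Real.exp_zero, one_mul] at h1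
      -- h1 : exp (C*s) * (1 + u s^2) ≤ 1 + u 0^2
      have h2 : Real.exp (C*A) ≤ Real.exp (C*s) :=
        Real.exp_le_exp.mpr (mul_le_mul_of_nonneg_left hs.1.le (by linarith))
      have h1' : (1 + u s ^ 2) * Real.exp (C*A) ≤ 1 + u 0 ^ 2 := by
        nlinarith [Real.exp_pos (C*A), sq_nonneg (u s)]
      have hmul : Real.exp (C*A) * Real.exp (C*(-A)) = 1 := by
        rw [← Real.exp_add, show C*A + C*(-A) = 0 by ring, Real.exp_zero]
      have h4 := mul_le_mul_of_nonneg_right h1' (Real.exp_pos (C*(-A))).le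
      rw [mul_assoc, hmul, mul_one] at h4
      nlinarith [Real.exp_pos (C*(-A))]
    obtain ⟨Mu, hMu⟩ : ∃ x : ℝ, x = (1 + u 0 ^ 2) * Real.exp (C * (-A)) := ⟨_, rfl⟩
    have hMu0 : 0 ≤ Mu := by rw [hMu]; positivity
    have hu'sq : ∀ s ∈ Ioc A 0, u' s ^ 2 ≤ (1 + K₁ * Mu) / 2 := by
      intro s hs
      have hmant := hman s hs
      have h3 : E s * u s ^ 2 ≤ K₁ * u s ^ 2 :=
        mul_le_mul_of_nonneg_right (le_trans (le_abs_self _) (hEb s hs)) (sq_nonneg _)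
      have h4 : K₁ * u s ^ 2 ≤ K₁ * Mu :=
        mul_le_mul_of_nonneg_left (hMu ▸ husq s hs) hK₁0
      nlinarith
    obtain ⟨M, hM⟩ : ∃ x : ℝ, x = max (max Mu 1) (max (max ((1 + K₁ * Mu)/2) 1) K₁) := ⟨_, rfl⟩
    have hMfacts : ∀ s ∈ Ioc A 0, |u s| ≤ M ∧ |u' s| ≤ M ∧ |E s| ≤ M := by
      intro s hs
      refine ⟨?_, ?_, ?_⟩
      · have h1 : |u s| ≤ max Mu 1 :=
          abs_le_of_sq_le' (le_max_right _ _) (le_trans (hMu ▸ husq s hs) (le_max_left _ _))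
        rw [hM]; exact le_trans h1 (le_max_left _ _)
      · have h1 : |u' s| ≤ max ((1 + K₁ * Mu)/2) 1 :=
          abs_le_of_sq_le' (le_max_right _ _) (le_trans (hu'sq s hs) (le_max_left _ _))
        rw [hM]
        exact le_trans h1 (le_trans (le_max_left _ _) (le_max_right _ _))
      · rw [hM]
        exact le_trans (hEb s hs) (le_trans (le_max_right _ _) (le_max_right _ _))
    exact hmax (lc_ext δ hsq A hA u u' E hsol M hMfacts)
  · -- Case II : E unbounded above
    push_neg at hbd
    obtain ⟨c, hc, hEc0⟩ := hbd 0
    have hIoc_sub : Ioc A c ⊆ Ioc A 0 := fun t ht => ⟨ht.1, le_trans ht.2 hc.2⟩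
    have hEpos : ∀ s ∈ Ioc A c, 0 < E s := fun s hs =>
      lt_of_lt_of_le hEc0 (hanti s (hIoc_sub hs) c hc hs.2)
    have hu'sq : ∀ s ∈ Ioc A c, 1 ≤ 2 * u' s ^ 2 := by
      intro s hs
      have h1 := hman s (hIoc_sub hs)
      nlinarith [mul_nonneg (hEpos s hs).le (sq_nonneg (u s))]
    have hu'ne : ∀ s ∈ Ioc A c, u' s ≠ 0 := by
      intro s hs h0
      have := hu'sq s hs
      rw [h0] at this
      norm_num at this
    obtain ⟨σ, hσdef⟩ : ∃ x : ℝ, x = if 0 < u' c then (1:ℝ) else -1 := ⟨_, rfl⟩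
    have hσ : σ = 1 ∨ σ = -1 := by
      rw [hσdef]; split_ifs
      exacts [Or.inl rfl, Or.inr rfl]
    have hccmem : c ∈ Ioc A c := ⟨hc.1, le_rfl⟩
    have hσc : 0 < σ * u' c := by
      rw [hσdef]; split_ifs with h
      · simpa using h
      · have h2 : u' c ≠ 0 := hu'ne c hccmem
        push_neg at h
        have : u' c < 0 := lt_of_le_of_ne h h2
        nlinarith
    have hσpos : ∀ s ∈ Ioc A c, 0 < σ * u' s := by
      intro s hs
      by_contra hle
      push_neg at hle
      have hne : σ * u' s ≠ 0 := by
        rcases hσ with h | h <;> rw [h] <;> simp [hu'ne s hs]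
      have hlt : σ * u' s < 0 := lt_of_le_of_ne hle hne
      have hIsub : Icc s c ⊆ Ioc A c := fun t ht => ⟨lt_of_lt_of_le hs.1 ht.1, ht.2⟩
      have hcontu' : ContinuousOn u' (Icc s c) := fun t ht =>
        ((hsol.2.1 t (hIoc_sub (hIsub ht))).continuousWithinAt).mono
          (fun y hy => hIoc_sub (hIsub hy))
      have hcont : ContinuousOn (fun t => σ * u' t) (Icc s c) :=
        continuousOn_const.mul hcontu'
      have hiv := intermediate_value_Icc hs.2 hcont
      have h0mem : (0:ℝ) ∈ Icc (σ * u' s) (σ * u' c) := ⟨hlt.le, hσc.le⟩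
      obtain ⟨t, htmem, ht0⟩ := hiv h0mem
      have hune : u' t ≠ 0 := hu'ne t (hIsub htmem)
      rcases hσ with h | h <;> rw [h] at ht0 <;> simp at ht0 <;> exact hune ht0
    have hw0 : ∀ s ∈ Ioc A c, 0 ≤ σ * u s := by
      intro s hs
      obtain ⟨s₀, hs₀S, hs₀⟩ := hcon s (hIoc_sub hs)
      have hs₀c : s₀ ∈ Ioc A c := ⟨hs₀S.1, le_trans hs₀S.2 hs.2⟩
      have h1 : 0 < σ * u' s₀ := hσpos s₀ hs₀c
      have h2 : 0 ≤ σ * u s₀ := by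
        rcases hσ with h | h <;> rw [h] at h1 ⊢ <;> nlinarith
      have hIsub : Icc s₀ s ⊆ Ioc A c := fun t ht =>
        ⟨lt_of_lt_of_le hs₀c.1 ht.1, le_trans ht.2 hs.2⟩
      have hmono := mono_Icc' hs₀S.2 (fun t => σ * u t) (fun t => σ * u' t)
        (fun t ht => ((hsol.1 t (hIoc_sub (hIsub ht))).mono
          (fun y hy => hIoc_sub (hIsub hy))).const_mul σ)
        (fun t ht => (hσpos t (hIsub ht)).le)
      linarith
    have hwc : ∀ s ∈ Ioc A c, σ * u s ≤ σ * u c := by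
      intro s hs
      have hIsub : Icc s c ⊆ Ioc A c := fun t ht => ⟨lt_of_lt_of_le hs.1 ht.1, ht.2⟩
      have hmono := mono_Icc' hs.2 (fun t => σ * u t) (fun t => σ * u' t)
        (fun t ht => ((hsol.1 t (hIoc_sub (hIsub ht))).mono
          (fun y hy => hIoc_sub (hIsub hy))).const_mul σ)
        (fun t ht => (hσpos t (hIsub ht)).le)
      simpa using hmono
    have husqR : ∀ s ∈ Ioc A c, u s ^ 2 ≤ u c ^ 2 := by
      intro s hs
      have h1 := hw0 s hs
      have h2 := hwc s hs
      have h3 := hw0 c hccmem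
      rcases hσ with h | h <;> rw [h] at h1 h2 h3 <;> nlinarith
    obtain ⟨k, hk⟩ : ∃ x : ℝ, x = 2 * Dstar * u c ^ 2 := ⟨_, rfl⟩
    have hk0 : 0 ≤ k := by rw [hk]; positivity
    obtain ⟨M₂, hM₂⟩ : ∃ x : ℝ, x = Real.exp (k*c) * u' c ^ 2 * Real.exp (k*(-A)) := ⟨_, rfl⟩
    have hM₂0 : 0 ≤ M₂ := by rw [hM₂]; positivity
    have hgr : ∀ s ∈ Ioc A c, u' s ^ 2 ≤ M₂ := by
      intro s hs
      have hIsub : Icc s c ⊆ Ioc A c := fun t ht => ⟨lt_of_lt_of_le hs.1 ht.1, ht.2⟩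
      have h1 := gronwall_aux' (k := k) hs.2 (fun t => u' t ^ 2)
        (fun t => 2 * u' t ^ 1 * (E t * u t / 2 - δ ((u t)^2) * (u t)^2 * u' t))
        (fun t ht => by
          simpa using ((hsol.2.1 t (hIoc_sub (hIsub ht))).mono
            (fun y hy => hIoc_sub (hIsub hy))).fun_pow 2)
        (fun t ht => by
          show 0 ≤ k * u' t ^ 2 +
            2 * u' t ^ 1 * (E t * u t / 2 - δ ((u t)^2) * (u t)^2 * u' t)
          have hEt := hEpos t (hIsub ht)
          have huu' : 0 ≤ u t * u' t := by
            have h1 := hw0 t (hIsub ht)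
            have h2 := hσpos t (hIsub ht)
            rcases hσ with h | h <;> rw [h] at h1 h2 <;> nlinarith
          have hδ1 := (hδall (u t)).1
          have hδ2 := (hδall (u t)).2
          have hR := husqR t (hIsub ht)
          have hδuR : δ ((u t)^2) * (u t)^2 ≤ Dstar * u c ^ 2 :=
            mul_le_mul hδ2 hR (sq_nonneg _) hDstar0
          rw [hk]
          nlinarith [mul_nonneg (sub_nonneg.mpr hδuR) (sq_nonneg (u' t)),
            mul_nonneg hEt.le huu', sq_nonneg (u' t)])
      -- h1 : exp (k*s) * u' s^2 ≤ exp (k*c) * u' c^2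
      have h2 : Real.exp (k*A) ≤ Real.exp (k*s) :=
        Real.exp_le_exp.mpr (mul_le_mul_of_nonneg_left hs.1.le hk0)
      have h1' : u' s ^ 2 * Real.exp (k*A) ≤ Real.exp (k*c) * u' c ^ 2 := by
        nlinarith [Real.exp_pos (k*A), sq_nonneg (u' s)]
      have hmul : Real.exp (k*A) * Real.exp (k*(-A)) = 1 := by
        rw [← Real.exp_add, show k*A + k*(-A) = 0 by ring, Real.exp_zero]
      have h4 := mul_le_mul_of_nonneg_right h1' (Real.exp_pos (k*(-A))).le
      rw [mul_assoc, hmul, mul_one] at h4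
      rw [hM₂]
      exact h4
    obtain ⟨C₂, hC₂⟩ : ∃ x : ℝ, x = 4 * Dstar * M₂ := ⟨_, rfl⟩
    have hC₂0 : 0 ≤ C₂ := by rw [hC₂]; positivity
    have hEbd : ∀ s ∈ Ioc A c, E s ≤ E c + C₂ * (c - A) := by
      intro s hs
      have hIsub : Icc s c ⊆ Ioc A c := fun t ht => ⟨lt_of_lt_of_le hs.1 ht.1, ht.2⟩
      have h1 := mono_Icc' hs.2 (fun t => E t + C₂ * t)
        (fun t => -4 * δ ((u t)^2) * (u' t)^2 + C₂)
        (fun t ht => ((hsol.2.2 t (hIoc_sub (hIsub ht))).mono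
          (fun y hy => hIoc_sub (hIsub hy))).add
          (by simpa using (hasDerivWithinAt_id t (Icc s c)).const_mul C₂))
        (fun t ht => by
          show 0 ≤ -4 * δ ((u t)^2) * (u' t)^2 + C₂
          have hδ1 := (hδall (u t)).1
          have hδ2 := (hδall (u t)).2
          have hu'M := hgr t (hIsub ht)
          have h5 : δ ((u t)^2) * (u' t)^2 ≤ Dstar * M₂ :=
            mul_le_mul hδ2 hu'M (sq_nonneg _) hDstar0
          rw [hC₂]
          nlinarith)
      have h6 : C₂ * A ≤ C₂ * s := mul_le_mul_of_nonneg_left hs.1.le hC₂0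
      nlinarith
    obtain ⟨s', hs', hKs'⟩ := hbd (max (E c + C₂ * (c - A)) (E c))
    rcases le_or_gt s' c with h | h
    · have h1 := hEbd s' ⟨hs'.1, h⟩
      have h2 := le_max_left (E c + C₂ * (c - A)) (E c)
      linarith
    · have h1 := hanti c hc s' hs' h.le
      have h2 := le_max_right (E c + C₂ * (c - A)) (E c)
      linarith
end

section
/- Let δ : ]0,∞[ → ℝ be continuous, nonnegative, bounded, continuously differentiable with lim_{r→0⁺} √r δ'(r) = 0. Let (u,E) : ]A,0] → ℝ² be a solution of the Levi-Civita system u'' + δ(u²)u²u' = Eu/2, E' = -4δ(u²)(u')² on the invariant manifold 2(u')² - Eu² = 1, maximal to the left. Then ∫_A^0 u(s)² ds = +∞. -/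
open Set Filter MeasureTheory
open scoped ENNReal Topology

lemma aux_monoOn {S : Set ℝ} (hS : Convex ℝ S) {f g : ℝ → ℝ}
    (hf : ∀ s ∈ S, HasDerivWithinAt f (g s) S s)
    (hg : ∀ s ∈ interior S, 0 ≤ g s) : MonotoneOn f S := by
  apply monotoneOn_of_deriv_nonneg hS (fun s hs => (hf s hs).continuousWithinAt)
  · intro s hs
    exact ((hf s (interior_subset hs)).hasDerivAt
      (mem_interior_iff_mem_nhds.1 hs)).differentiableAt.differentiableWithinAt
  · intro s hs
    rw [((hf s (interior_subset hs)).hasDerivAt (mem_interior_iff_mem_nhds.1 hs)).deriv]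
    exact hg s hs

lemma aux_antiOn {S : Set ℝ} (hS : Convex ℝ S) {f g : ℝ → ℝ}
    (hf : ∀ s ∈ S, HasDerivWithinAt f (g s) S s)
    (hg : ∀ s ∈ interior S, g s ≤ 0) : AntitoneOn f S := by
  apply antitoneOn_of_deriv_nonpos hS (fun s hs => (hf s hs).continuousWithinAt)
  · intro s hs
    exact ((hf s (interior_subset hs)).hasDerivAt
      (mem_interior_iff_mem_nhds.1 hs)).differentiableAt.differentiableWithinAt
  · intro s hs
    rw [((hf s (interior_subset hs)).hasDerivAt (mem_interior_iff_mem_nhds.1 hs)).deriv]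
    exact hg s hs

lemma aux_bot (δ : ℝ → ℝ) (hd0 : ∀ v : ℝ, 0 ≤ δ (v ^ 2))
    (hdc : Continuous fun v : ℝ => δ (v ^ 2))
    (u u' E : ℝ → ℝ)
    (hu : ∀ s ∈ Iic (0:ℝ), HasDerivWithinAt u (u' s) (Iic 0) s)
    (hu' : ∀ s ∈ Iic (0:ℝ), HasDerivWithinAt u'
      (E s * u s / 2 - δ ((u s) ^ 2) * (u s) ^ 2 * u' s) (Iic 0) s)
    (hE : ∀ s ∈ Iic (0:ℝ), HasDerivWithinAt E (-4 * δ ((u s) ^ 2) * (u' s) ^ 2) (Iic 0) s)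
    (hman : ∀ s ∈ Iic (0:ℝ), 2 * (u' s) ^ 2 - E s * (u s) ^ 2 = 1)
    (hfin : ∫⁻ s in Iic (0:ℝ), ENNReal.ofReal ((u s) ^ 2) ≠ ⊤) : False := by
  set T : ℝ := (∫⁻ s in Iic (0:ℝ), ENNReal.ofReal ((u s) ^ 2)).toReal with hTdef
  have hucont : ContinuousOn u (Iic 0) := fun s hs => (hu s hs).continuousWithinAt
  have husq : ContinuousOn (fun s => (u s) ^ 2) (Iic 0) := hucont.pow 2
  -- integral bound
  have hTb : ∀ s : ℝ, s ≤ 0 → ∫ σ in s..0, (u σ) ^ 2 ≤ T := by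
    intro s hs
    rw [intervalIntegral.integral_of_le hs]
    have hmeas : AEStronglyMeasurable (fun σ : ℝ => (u σ) ^ 2) (volume.restrict (Ioc s 0)) :=
      (husq.mono Ioc_subset_Iic_self).aestronglyMeasurable measurableSet_Ioc
    rw [MeasureTheory.integral_eq_lintegral_of_nonneg_ae
      (Eventually.of_forall fun x => sq_nonneg _) hmeas]
    exact ENNReal.toReal_mono hfin
      (lintegral_mono' (Measure.restrict_mono Ioc_subset_Iic_self le_rfl) le_rfl)
  -- physical time
  set V : ℝ → ℝ := fun t => ∫ σ in (0:ℝ)..t, (u σ) ^ 2 with hVdef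
  have hVder : ∀ s ∈ Iic (0:ℝ), HasDerivWithinAt V ((u s) ^ 2) (Iic 0) s := by
    intro s hs
    have hsub : uIcc (0:ℝ) s ⊆ Iic 0 := by
      rw [uIcc_of_ge hs]; exact Icc_subset_Iic_self
    have hint : IntervalIntegrable (fun σ => (u σ) ^ 2) volume 0 s :=
      (husq.mono hsub).intervalIntegrable
    rcases eq_or_lt_of_le (mem_Iic.1 hs) with heq | hs'
    · subst heq
      exact intervalIntegral.integral_hasDerivWithinAt_right hint
        ⟨Iic 0, self_mem_nhdsWithin, husq.aestronglyMeasurable measurableSet_Iic⟩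
        (husq 0 (mem_Iic.2 le_rfl))
    · exact (intervalIntegral.integral_hasDerivAt_right hint
        ⟨Iic 0, Iic_mem_nhds hs', husq.aestronglyMeasurable measurableSet_Iic⟩
        ((husq s hs).continuousAt (Iic_mem_nhds hs'))).hasDerivWithinAt
  have hVlb : ∀ s : ℝ, s ≤ 0 → -T ≤ V s := by
    intro s hs
    have h4 : V s = -∫ σ in s..0, (u σ) ^ 2 := by
      rw [hVdef]; rw [← intervalIntegral.integral_symm]
    rw [h4]; linarith [hTb s hs]
  -- E is antitone
  have hEanti : AntitoneOn E (Iic 0) := by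
    apply aux_antiOn (convex_Iic 0) hE
    intro s _
    nlinarith [mul_nonneg (hd0 (u s)) (sq_nonneg (u' s))]
  have hE0 : ∀ s ∈ Iic (0:ℝ), E 0 ≤ E s := fun s hs => hEanti hs (mem_Iic.2 le_rfl) hs
  -- the antiderivative H
  set H : ℝ → ℝ := fun w => ∫ y in (0:ℝ)..w, 2 * δ (y ^ 2) * y ^ 3 with hHdef
  have hHc : Continuous fun y : ℝ => 2 * δ (y ^ 2) * y ^ 3 :=
    (continuous_const.mul hdc).mul (continuous_pow 3)
  have hHder : ∀ w : ℝ, HasDerivAt H (2 * δ (w ^ 2) * w ^ 3) w := fun w =>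
    intervalIntegral.integral_hasDerivAt_right (hHc.intervalIntegrable 0 w)
      (hHc.stronglyMeasurableAtFilter _ _) hHc.continuousAt
  have hH0 : ∀ w : ℝ, 0 ≤ H w := by
    intro w
    rcases le_or_gt 0 w with h | h
    · exact intervalIntegral.integral_nonneg h fun y hy =>
        mul_nonneg (mul_nonneg (by norm_num) (hd0 y)) (pow_nonneg hy.1 3)
    · have h2 : H w = -∫ y in w..(0:ℝ), 2 * δ (y ^ 2) * y ^ 3 := by
        rw [hHdef, ← intervalIntegral.integral_symm]
      have h3 : 0 ≤ ∫ y in w..(0:ℝ), -(2 * δ (y ^ 2) * y ^ 3) := by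
        apply intervalIntegral.integral_nonneg h.le
        intro y hy
        have h4 : y ^ 3 ≤ 0 := Odd.pow_nonpos (by decide) hy.2
        nlinarith [hd0 y]
      rw [intervalIntegral.integral_neg] at h3
      rw [h2]; linarith
  -- the quantity W
  set W : ℝ → ℝ := fun s => -(2 * (u s * u' s)) - H (u s) with hWdef
  have hWder : ∀ s ∈ Iic (0:ℝ),
      HasDerivWithinAt W (-(1 + 2 * E s * (u s) ^ 2)) (Iic 0) s := by
    intro s hs
    have h1 := (hu s hs).mul (hu' s hs)
    have h2 := (hHder (u s)).comp_hasDerivWithinAt s (hu s hs)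
    have h3 := (h1.const_mul (2:ℝ)).neg.sub h2
    refine h3.congr_deriv ?_
    linear_combination -(hman s hs)
  -- Z is antitone
  set Z : ℝ → ℝ := fun s => W s + s - 2 * |E 0| * V s with hZdef
  have hZder : ∀ s ∈ Iic (0:ℝ), HasDerivWithinAt Z
      (-(1 + 2 * E s * (u s) ^ 2) + 1 - 2 * |E 0| * (u s) ^ 2) (Iic 0) s := by
    intro s hs
    exact ((hWder s hs).add (hasDerivWithinAt_id s _)).sub
      ((hVder s hs).const_mul (2 * |E 0|))
  have hZanti : AntitoneOn Z (Iic 0) := by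
    apply aux_antiOn (convex_Iic 0) hZder
    intro s hs
    have h1 : E 0 ≤ E s := hE0 s (interior_subset hs)
    nlinarith [mul_nonneg (show (0:ℝ) ≤ E s + |E 0| by linarith [neg_abs_le (E 0)])
      (sq_nonneg (u s))]
  -- lower bound for W
  have hWlb : ∀ s : ℝ, s ≤ 0 → W 0 - s - 2 * |E 0| * T ≤ W s := by
    intro s hs
    have h1 : Z 0 ≤ Z s := hZanti (mem_Iic.2 hs) (mem_Iic.2 le_rfl) hs
    have h2 : V 0 = 0 := intervalIntegral.integral_same
    have h3 : -T ≤ V s := hVlb s hs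
    rw [hZdef] at h1
    simp only [h2] at h1
    nlinarith [mul_le_mul_of_nonneg_left h3 (show (0:ℝ) ≤ 2 * |E 0| by positivity)]
  -- derivative of u^2 is eventually very negative
  set C₁ : ℝ := 2 * |E 0| * T - W 0 with hC₁def
  have hv'ub : ∀ s ∈ Iic (0:ℝ), 2 * (u s * u' s) ≤ s + C₁ := by
    intro s hs
    have h1 := hWlb s (mem_Iic.1 hs)
    have h2 := hH0 (u s)
    have hWs : W s = -(2 * (u s * u' s)) - H (u s) := rfl
    linarith [hC₁def.le, hC₁def.ge]
  -- the comparison function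
  set φ : ℝ → ℝ := fun s => u s ^ 2 - s ^ 2 / 2 - C₁ * s with hφdef
  have hφder : ∀ s ∈ Iic (0:ℝ), HasDerivWithinAt φ
      (2 * (u s * u' s) - s - C₁) (Iic 0) s := by
    intro s hs
    have h1 : HasDerivWithinAt (fun σ : ℝ => u σ ^ 2) (2 * (u s * u' s)) (Iic 0) s := by
      have := (hu s hs).pow 2
      refine this.congr_deriv ?_
      ring
    have h2 : HasDerivWithinAt (fun σ : ℝ => σ ^ 2 / 2) s (Iic 0) s := by
      have := ((hasDerivWithinAt_id s (Iic (0:ℝ))).pow 2).div_const 2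
      refine this.congr_deriv ?_
      simp
    have h3 : HasDerivWithinAt (fun σ : ℝ => C₁ * σ) C₁ (Iic 0) s := by
      have := (hasDerivWithinAt_id s (Iic (0:ℝ))).const_mul C₁
      refine this.congr_deriv ?_
      simp
    exact (h1.sub h2).sub h3
  have hφanti : AntitoneOn φ (Iic 0) := by
    apply aux_antiOn (convex_Iic 0) hφder
    intro s hs
    have := hv'ub s (interior_subset hs)
    linarith
  have hφlb : ∀ s : ℝ, s ≤ 0 → u 0 ^ 2 + s ^ 2 / 2 + C₁ * s ≤ u s ^ 2 := by
    intro s hs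
    have h1 : φ 0 ≤ φ s := hφanti (mem_Iic.2 hs) (mem_Iic.2 le_rfl) hs
    rw [hφdef] at h1
    simp only at h1
    nlinarith
  -- conclude: u^2 ≥ 1 far in the past
  set s₁ : ℝ := -(2 * |C₁| + 2) with hs₁def
  have hs₁0 : s₁ ≤ 0 := by
    rw [hs₁def]; nlinarith [abs_nonneg C₁]
  have hsq1 : ∀ s : ℝ, s ≤ s₁ → 1 ≤ (u s) ^ 2 := by
    intro s hs
    have h0 : s ≤ 0 := le_trans hs hs₁0
    have h1 := hφlb s h0
    rw [hs₁def] at hs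
    nlinarith [sq_nonneg (u 0), abs_nonneg C₁,
      mul_nonneg (sub_nonneg.2 (le_abs_self C₁)) (neg_nonneg.2 h0)]
  -- contradiction with finiteness
  apply hfin
  have hind : ∀ x : ℝ, (Iic s₁).indicator (fun _ => (1:ℝ≥0∞)) x ≤
      (Iic 0).indicator (fun s => ENNReal.ofReal ((u s) ^ 2)) x := by
    intro x
    by_cases hx : x ∈ Iic s₁
    · rw [indicator_of_mem hx, indicator_of_mem (show x ∈ Iic 0 from le_trans hx hs₁0)]
      exact ENNReal.one_le_ofReal.2 (hsq1 x hx)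
    · rw [indicator_of_notMem hx]
      exact zero_le
  have htop : (⊤:ℝ≥0∞) ≤ ∫⁻ s in Iic (0:ℝ), ENNReal.ofReal ((u s) ^ 2) := by
    calc (⊤:ℝ≥0∞) = ∫⁻ _ in Iic s₁, (1:ℝ≥0∞) := by rw [setLIntegral_one, Real.volume_Iic]
    _ = ∫⁻ x, (Iic s₁).indicator (fun _ => (1:ℝ≥0∞)) x := (lintegral_indicator measurableSet_Iic _).symm
    _ ≤ ∫⁻ x, (Iic 0).indicator (fun s => ENNReal.ofReal ((u s) ^ 2)) x := lintegral_mono hind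
    _ = _ := lintegral_indicator measurableSet_Iic _
  exact top_le_iff.1 htop

lemma aux_tendsto {a : ℝ} (ha : a < 0) {f g : ℝ → ℝ} {C : ℝ}
    (hf : ∀ s ∈ Ioc a (0:ℝ), HasDerivWithinAt f (g s) (Ioc a 0) s)
    (hb : ∀ s ∈ Ioc a (0:ℝ), |g s| ≤ C) :
    ∃ L : ℝ, Tendsto f (𝓝[>] a) (𝓝 L) := by
  have hC0 : 0 ≤ C := le_trans (abs_nonneg _) (hb 0 ⟨ha, le_rfl⟩)
  have hlip : LipschitzOnWith (Real.toNNReal C) f (Ioc a 0) := by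
    rw [lipschitzOnWith_iff_dist_le_mul]
    intro x hx y hy
    rw [Real.dist_eq, Real.dist_eq, Real.coe_toNNReal C hC0]
    exact Convex.norm_image_sub_le_of_norm_hasDerivWithin_le hf
      (fun s hs => by rw [Real.norm_eq_abs]; exact hb s hs) (convex_Ioc a 0) hy hx
  obtain ⟨G, hG, hGe⟩ := hlip.extend_real
  refine ⟨G a, ?_⟩
  have h1 : Tendsto G (𝓝[>] a) (𝓝 (G a)) := (hG.continuous.tendsto a).mono_left nhdsWithin_le_nhds
  apply h1.congr'
  filter_upwards [Ioo_mem_nhdsGT_of_mem (⟨le_rfl, ha⟩ : a ∈ Ico a 0)] with x hx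
  exact (hGe ⟨hx.1, hx.2.le⟩).symm

lemma aux_bounds (δ : ℝ → ℝ) (hd0 : ∀ v : ℝ, 0 ≤ δ (v ^ 2)) (Dstar : ℝ)
    (hdD : ∀ v : ℝ, δ (v ^ 2) ≤ Dstar) (hD0 : 0 ≤ Dstar)
    (a : ℝ) (ha0 : a < 0)
    (u u' E : ℝ → ℝ)
    (hu : ∀ s ∈ Ioc a (0:ℝ), HasDerivWithinAt u (u' s) (Ioc a 0) s)
    (hu' : ∀ s ∈ Ioc a (0:ℝ), HasDerivWithinAt u'
      (E s * u s / 2 - δ ((u s) ^ 2) * (u s) ^ 2 * u' s) (Ioc a 0) s)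
    (hE : ∀ s ∈ Ioc a (0:ℝ), HasDerivWithinAt E (-4 * δ ((u s) ^ 2) * (u' s) ^ 2) (Ioc a 0) s)
    (hman : ∀ s ∈ Ioc a (0:ℝ), 2 * (u' s) ^ 2 - E s * (u s) ^ 2 = 1)
    (hfin : ∫⁻ s in Ioc a (0:ℝ), ENNReal.ofReal ((u s) ^ 2) ≠ ⊤) :
    ∃ M M2 EM : ℝ, 0 ≤ M ∧ 0 ≤ M2 ∧ 0 ≤ EM ∧
      (∀ s ∈ Ioc a (0:ℝ), (u s) ^ 2 ≤ M) ∧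
      (∀ s ∈ Ioc a (0:ℝ), (u' s) ^ 2 ≤ M2) ∧
      (∀ s ∈ Ioc a (0:ℝ), |E s| ≤ EM) := by
  have h0S : (0:ℝ) ∈ Ioc a 0 := ⟨ha0, le_rfl⟩
  set T : ℝ := (∫⁻ s in Ioc a (0:ℝ), ENNReal.ofReal ((u s) ^ 2)).toReal with hTdef
  have hucont : ContinuousOn u (Ioc a 0) := fun s hs => (hu s hs).continuousWithinAt
  have husq : ContinuousOn (fun s => (u s) ^ 2) (Ioc a 0) := hucont.pow 2
  have hTb : ∀ s ∈ Ioc a (0:ℝ), ∫ σ in s..0, (u σ) ^ 2 ≤ T := by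
    intro s hs
    rw [intervalIntegral.integral_of_le hs.2]
    have hmeas : AEStronglyMeasurable (fun σ : ℝ => (u σ) ^ 2) (volume.restrict (Ioc s 0)) :=
      (husq.mono (Ioc_subset_Ioc_left hs.1.le)).aestronglyMeasurable measurableSet_Ioc
    rw [MeasureTheory.integral_eq_lintegral_of_nonneg_ae
      (Eventually.of_forall fun x => sq_nonneg _) hmeas]
    exact ENNReal.toReal_mono hfin
      (lintegral_mono' (Measure.restrict_mono (Ioc_subset_Ioc_left hs.1.le) le_rfl) le_rfl)
  -- physical time
  set V : ℝ → ℝ := fun t => ∫ σ in (0:ℝ)..t, (u σ) ^ 2 with hVdef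
  have hmemIic : Ioc a 0 ∈ 𝓝[Iic 0] (0:ℝ) := by
    apply mem_nhdsWithin.2 ⟨Ioi a, isOpen_Ioi, ha0, ?_⟩
    rintro x ⟨hx1, hx2⟩; exact ⟨hx1, hx2⟩
  have hVder : ∀ s ∈ Ioc a (0:ℝ), HasDerivWithinAt V ((u s) ^ 2) (Ioc a 0) s := by
    intro s hs
    have hsub : uIcc (0:ℝ) s ⊆ Ioc a 0 := by
      rw [uIcc_of_ge hs.2]
      exact Icc_subset_Ioc_iff hs.2 |>.2 ⟨hs.1, le_refl 0⟩
    have hint : IntervalIntegrable (fun σ => (u σ) ^ 2) volume 0 s :=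
      (husq.mono hsub).intervalIntegrable
    rcases eq_or_lt_of_le hs.2 with heq | hs'
    · subst heq
      have h1 : HasDerivWithinAt V ((u (0:ℝ)) ^ 2) (Iic (0:ℝ)) 0 :=
        intervalIntegral.integral_hasDerivWithinAt_right hint
          ⟨Ioc a 0, hmemIic, husq.aestronglyMeasurable measurableSet_Ioc⟩
          ((husq 0 hs).mono_of_mem_nhdsWithin hmemIic)
      exact h1.mono Ioc_subset_Iic_self
    · exact (intervalIntegral.integral_hasDerivAt_right hint
        ⟨Ioc a 0, Ioc_mem_nhds hs.1 hs', husq.aestronglyMeasurable measurableSet_Ioc⟩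
        ((husq s hs).continuousAt (Ioc_mem_nhds hs.1 hs'))).hasDerivWithinAt
  have hVlb : ∀ s ∈ Ioc a (0:ℝ), -T ≤ V s := by
    intro s hs
    have h4 : V s = -∫ σ in s..0, (u σ) ^ 2 := by
      rw [hVdef]; rw [← intervalIntegral.integral_symm]
    rw [h4]; linarith [hTb s hs]
  have hVub : ∀ s ∈ Ioc a (0:ℝ), V s ≤ 0 := by
    intro s hs
    have h4 : V s = -∫ σ in s..0, (u σ) ^ 2 := by
      rw [hVdef]; rw [← intervalIntegral.integral_symm]
    have h5 : 0 ≤ ∫ σ in s..0, (u σ) ^ 2 :=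
      intervalIntegral.integral_nonneg hs.2 (fun x _ => sq_nonneg _)
    rw [h4]; linarith
  have hV0 : V 0 = 0 := intervalIntegral.integral_same
  -- E is antitone, hence bounded below
  have hEanti : AntitoneOn E (Ioc a 0) := by
    apply aux_antiOn (convex_Ioc a 0) hE
    intro s _
    nlinarith [mul_nonneg (hd0 (u s)) (sq_nonneg (u' s))]
  have hE0 : ∀ s ∈ Ioc a (0:ℝ), E 0 ≤ E s := fun s hs => hEanti hs h0S hs.2
  -- upper bound for E via the exponential trick
  set Y : ℝ → ℝ := fun s => E s * Real.exp (2 * Dstar * V s) + 2 * Dstar * s with hYdef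
  have hYder : ∀ s ∈ Ioc a (0:ℝ), HasDerivWithinAt Y
      ((-4 * δ ((u s) ^ 2) * (u' s) ^ 2) * Real.exp (2 * Dstar * V s)
        + E s * (Real.exp (2 * Dstar * V s) * (2 * Dstar * (u s) ^ 2)) + 2 * Dstar * 1)
      (Ioc a 0) s := by
    intro s hs
    exact ((hE s hs).mul (((hVder s hs).const_mul (2*Dstar)).exp)).add
      ((hasDerivWithinAt_id s _).const_mul (2*Dstar))
  have hYmono : MonotoneOn Y (Ioc a 0) := by
    apply aux_monoOn (convex_Ioc a 0) hYder
    intro s hs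
    rw [interior_Ioc] at hs
    have hm := hman s ⟨hs.1, hs.2.le⟩
    have hP1 : Real.exp (2 * Dstar * V s) ≤ 1 := by
      rw [Real.exp_le_one_iff]
      have := hVub s ⟨hs.1, hs.2.le⟩
      nlinarith
    have hP0 : (0:ℝ) < Real.exp (2 * Dstar * V s) := Real.exp_pos _
    have h2 : δ ((u s) ^ 2) * (u' s) ^ 2 ≤ Dstar * (u' s) ^ 2 :=
      mul_le_mul_of_nonneg_right (hdD (u s)) (sq_nonneg _)
    have key : -2*Dstar - 2*Dstar*(E s * (u s)^2) ≤ (-4 * δ ((u s) ^ 2) * (u' s) ^ 2)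
        + 2*Dstar*(E s * (u s)^2) - 2*Dstar*(E s * (u s)^2) := by nlinarith
    have key2 : (-2*Dstar) * Real.exp (2 * Dstar * V s) ≤
        ((-4 * δ ((u s) ^ 2) * (u' s) ^ 2) + 2*Dstar*(E s * (u s)^2))
          * Real.exp (2 * Dstar * V s) := by
      apply mul_le_mul_of_nonneg_right _ hP0.le
      nlinarith
    have key3 : 2*Dstar * Real.exp (2 * Dstar * V s) ≤ 2*Dstar :=
      mul_le_of_le_one_right (by linarith) hP1
    nlinarith [key2, key3]
  have hYbd : ∀ s ∈ Ioc a (0:ℝ), E s * Real.exp (2 * Dstar * V s) ≤ |E 0| + 2*Dstar*(-a) := by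
    intro s hs
    have h1 : Y s ≤ Y 0 := hYmono hs h0S hs.2
    rw [hYdef] at h1
    simp only [hV0, mul_zero, Real.exp_zero, mul_one] at h1
    have h2 : 2*Dstar*s + 2*Dstar*(-a) ≥ 0 := by nlinarith [hs.1]
    have h3 : E 0 ≤ |E 0| := le_abs_self _
    nlinarith
  -- the upper bound Ē for E
  set c₂ : ℝ := |E 0| + 2*Dstar*(-a) with hc₂def
  have hc₂0 : 0 ≤ c₂ := by
    rw [hc₂def]
    nlinarith [abs_nonneg (E 0)]
  set Ebar : ℝ := c₂ * Real.exp (2*Dstar*T) with hEbardef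
  have hEbar0 : 0 ≤ Ebar := mul_nonneg hc₂0 (Real.exp_pos _).le
  have hEub : ∀ s ∈ Ioc a (0:ℝ), E s ≤ Ebar := by
    intro s hs
    rcases le_or_gt (E s) 0 with hEs | hEs
    · linarith
    · have hPlb : Real.exp (-(2*Dstar*T)) ≤ Real.exp (2*Dstar*V s) := by
        apply Real.exp_le_exp.2
        nlinarith [hVlb s hs]
      have h5 : E s * Real.exp (-(2*Dstar*T)) ≤ c₂ :=
        le_trans (mul_le_mul_of_nonneg_left hPlb hEs.le) (hYbd s hs)
      have h6 : E s = E s * Real.exp (-(2*Dstar*T)) * Real.exp (2*Dstar*T) := by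
        rw [mul_assoc, ← Real.exp_add]
        simp
      rw [h6, hEbardef]
      exact mul_le_mul_of_nonneg_right h5 (Real.exp_pos _).le
  -- bound for u^2 via the exponential trick
  set K : ℝ := 1 + Ebar/2 with hKdef
  have hK1 : (1:ℝ) ≤ K := by rw [hKdef]; linarith
  have hKpos : (0:ℝ) < K := by linarith
  have husqder : ∀ s ∈ Ioc a (0:ℝ),
      HasDerivWithinAt (fun σ : ℝ => (u σ) ^ 2) (2 * (u s * u' s)) (Ioc a 0) s := by
    intro s hs
    have := (hu s hs).pow 2
    refine this.congr_deriv ?_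
    ring
  have hvlow : ∀ s ∈ Ioc a (0:ℝ), -(1/2 + K * (u s)^2) ≤ 2 * (u s * u' s) := by
    intro s hs
    have hm := hman s hs
    have h7 : E s * (u s)^2 ≤ Ebar * (u s)^2 :=
      mul_le_mul_of_nonneg_right (hEub s hs) (sq_nonneg _)
    nlinarith [sq_nonneg (u s + u' s)]
  set R : ℝ → ℝ := fun s => ((u s) ^ 2 + 1/(2*K)) * Real.exp (K * s) with hRdef
  have hRder : ∀ s ∈ Ioc a (0:ℝ), HasDerivWithinAt R
      ((2 * (u s * u' s)) * Real.exp (K * s)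
        + ((u s) ^ 2 + 1/(2*K)) * (Real.exp (K * s) * (K * 1))) (Ioc a 0) s := by
    intro s hs
    exact ((husqder s hs).add_const (1/(2*K))).mul
      (((hasDerivWithinAt_id s _).const_mul K).exp)
  have hRmono : MonotoneOn R (Ioc a 0) := by
    apply aux_monoOn (convex_Ioc a 0) hRder
    intro s hs
    rw [interior_Ioc] at hs
    have h7 : K * (1/(2*K)) = 1/2 := by field_simp
    have h8 : 0 ≤ (2 * (u s * u' s) + K * (u s)^2 + K * (1/(2*K))) * Real.exp (K * s) := by
      apply mul_nonneg _ (Real.exp_pos _).le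
      rw [h7]
      linarith [hvlow s ⟨hs.1, hs.2.le⟩]
    nlinarith [h8]
  set M : ℝ := ((u 0) ^ 2 + 1/(2*K)) * Real.exp (K * (-a)) with hMdef
  have hM : ∀ s ∈ Ioc a (0:ℝ), (u s) ^ 2 ≤ M := by
    intro s hs
    have h1 : R s ≤ R 0 := hRmono hs h0S hs.2
    rw [hRdef] at h1
    simp only [mul_zero, Real.exp_zero, mul_one] at h1
    have h2 : Real.exp (K * a) ≤ Real.exp (K * s) := Real.exp_le_exp.2 (by nlinarith [hs.1])
    have h3 : (0:ℝ) < (u s) ^ 2 + 1/(2*K) := by positivity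
    have h4 : ((u s) ^ 2 + 1/(2*K)) * Real.exp (K * a) ≤ (u 0) ^ 2 + 1/(2*K) :=
      le_trans (mul_le_mul_of_nonneg_left h2 h3.le) h1
    have h5 : ((u s) ^ 2 + 1/(2*K)) = ((u s) ^ 2 + 1/(2*K)) * Real.exp (K * a)
        * Real.exp (K * (-a)) := by
      rw [mul_assoc, ← Real.exp_add]
      simp
    have h6 : ((u s) ^ 2 + 1/(2*K)) ≤ M := by
      rw [h5, hMdef]
      exact mul_le_mul_of_nonneg_right h4 (Real.exp_pos _).le
    have h9 : 0 < 1/(2*K) := by positivity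
    linarith
  have hM0 : 0 ≤ M := le_trans (sq_nonneg (u 0)) (hM 0 h0S)
  set M2 : ℝ := (1 + Ebar * M)/2 with hM2def
  have hM2 : ∀ s ∈ Ioc a (0:ℝ), (u' s) ^ 2 ≤ M2 := by
    intro s hs
    have hm := hman s hs
    have h7 : E s * (u s)^2 ≤ Ebar * (u s)^2 :=
      mul_le_mul_of_nonneg_right (hEub s hs) (sq_nonneg _)
    have h8 : Ebar * (u s)^2 ≤ Ebar * M := mul_le_mul_of_nonneg_left (hM s hs) hEbar0
    rw [hM2def]
    linarith
  have hM20 : 0 ≤ M2 := le_trans (sq_nonneg (u' 0)) (hM2 0 h0S)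
  set EM : ℝ := |E 0| + Ebar with hEMdef
  have hEM0 : 0 ≤ EM := by rw [hEMdef]; positivity
  have hEbd : ∀ s ∈ Ioc a (0:ℝ), |E s| ≤ EM := by
    intro s hs
    rw [hEMdef]
    rw [abs_le]
    constructor
    · linarith [hE0 s hs, neg_abs_le (E 0)]
    · linarith [hEub s hs, abs_nonneg (E 0)]
  exact ⟨M, M2, EM, hM0, hM20, hEM0, hM, hM2, hEbd⟩

lemma aux_glue {a ε B : ℝ} (ha : a < 0) (hBa : B < a) (hBe : a - ε < B) (hε : 0 < ε)
    {f g αc gα : ℝ → ℝ}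
    (hfder : ∀ s ∈ Ioc a (0:ℝ), HasDerivWithinAt f (g s) (Ioc a 0) s)
    (hαder : ∀ t ∈ Ioo (a-ε) (a+ε), HasDerivAt αc (gα t) t)
    (htf : Tendsto f (𝓝[>] a) (𝓝 (αc a)))
    (htg : Tendsto g (𝓝[>] a) (𝓝 (gα a))) :
    ∀ s ∈ Ioc B (0:ℝ), HasDerivWithinAt (fun x => if a < x then f x else αc x)
      (if a < s then g s else gα s) (Ioc B 0) s := by
  intro s hs
  set Q : ℝ → ℝ := fun x => if a < x then f x else αc x with hQdef
  rcases lt_trichotomy a s with hlt | heq | hgt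
  · rw [if_pos hlt]
    have hmem : Ioc a 0 ∈ 𝓝[Ioc B 0] s := by
      apply mem_nhdsWithin.2 ⟨Ioi a, isOpen_Ioi, hlt, ?_⟩
      rintro x ⟨hx1, hx2⟩
      exact ⟨hx1, hx2.2⟩
    have hev : Q =ᶠ[𝓝[Ioc B 0] s] f := by
      filter_upwards [nhdsWithin_le_nhds (Ioi_mem_nhds hlt)] with x hx
      exact if_pos hx
    exact ((hfder s ⟨hlt, hs.2⟩).mono_of_mem_nhdsWithin hmem).congr_of_eventuallyEq
      hev (if_pos hlt)
  · subst heq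
    rw [if_neg (lt_irrefl a)]
    have haI : a ∈ Ioo (a-ε) (a+ε) := ⟨by linarith, by linarith⟩
    have hleft : HasDerivWithinAt Q (gα a) (Iic a) a := by
      apply ((hαder a haI).hasDerivWithinAt).congr ?_ (show Q a = αc a by simp [hQdef])
      intro x hx
      exact if_neg (not_lt.2 hx)
    have hIoo : Ioo a 0 ∈ 𝓝[>] a := Ioo_mem_nhdsGT_of_mem ⟨le_rfl, ha⟩
    have hQat : ∀ x ∈ Ioo a 0, HasDerivAt Q (g x) x := by
      intro x hx
      have hx' : Ioc a 0 ∈ 𝓝 x := Ioc_mem_nhds hx.1 hx.2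
      apply ((hfder x ⟨hx.1, hx.2.le⟩).hasDerivAt hx').congr_of_eventuallyEq
      filter_upwards [Ioi_mem_nhds hx.1] with y hy
      exact if_pos hy
    have hdiff : DifferentiableOn ℝ Q (Ioo a 0) := fun x hx =>
      (hQat x hx).differentiableAt.differentiableWithinAt
    have hlim : ContinuousWithinAt Q (Ioo a 0) a := by
      have h3 : Tendsto Q (𝓝[>] a) (𝓝 (αc a)) := by
        apply htf.congr'
        filter_upwards [self_mem_nhdsWithin] with x hx
        exact (if_pos hx).symm
      have h4 := h3.mono_left (nhdsWithin_mono a (Ioo_subset_Ioi_self : Ioo a 0 ⊆ Ioi a))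
      simpa [ContinuousWithinAt, hQdef, if_neg (lt_irrefl a)] using h4
    have hderlim : Tendsto (deriv Q) (𝓝[>] a) (𝓝 (gα a)) := by
      apply htg.congr'
      filter_upwards [hIoo] with x hx
      exact ((hQat x hx).deriv).symm
    have hright : HasDerivWithinAt Q (gα a) (Ici a) a :=
      hasDerivWithinAt_Ici_of_tendsto_deriv hdiff hlim hIoo hderlim
    apply (hleft.union hright).mono
    intro x _
    exact (le_total x a).imp id id
  · rw [if_neg (not_lt.2 hgt.le)]
    have hsI : s ∈ Ioo (a-ε) (a+ε) := ⟨by linarith [hs.1], by linarith⟩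
    have h1 : HasDerivAt Q (gα s) s := by
      apply (hαder s hsI).congr_of_eventuallyEq
      filter_upwards [Iio_mem_nhds hgt] with y hy
      exact if_neg (not_lt.2 hy.le)
    exact h1.hasDerivWithinAt

lemma aux_real (δ : ℝ → ℝ) (hd0 : ∀ v : ℝ, 0 ≤ δ (v ^ 2)) (Dstar : ℝ)
    (hdD : ∀ v : ℝ, δ (v ^ 2) ≤ Dstar) (hD0 : 0 ≤ Dstar)
    (hsq : ContDiff ℝ 1 fun v : ℝ => δ (v ^ 2))
    (a : ℝ) (ha0 : a < 0)
    (u u' E : ℝ → ℝ)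
    (hu : ∀ s ∈ Ioc a (0:ℝ), HasDerivWithinAt u (u' s) (Ioc a 0) s)
    (hu' : ∀ s ∈ Ioc a (0:ℝ), HasDerivWithinAt u'
      (E s * u s / 2 - δ ((u s) ^ 2) * (u s) ^ 2 * u' s) (Ioc a 0) s)
    (hE : ∀ s ∈ Ioc a (0:ℝ), HasDerivWithinAt E (-4 * δ ((u s) ^ 2) * (u' s) ^ 2) (Ioc a 0) s)
    (hman : ∀ s ∈ Ioc a (0:ℝ), 2 * (u' s) ^ 2 - E s * (u s) ^ 2 = 1)
    (hfin : ∫⁻ s in Ioc a (0:ℝ), ENNReal.ofReal ((u s) ^ 2) ≠ ⊤) :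
    ∃ (B : ℝ) (q q' F : ℝ → ℝ), B < a ∧
      (∀ s ∈ Ioc B (0:ℝ), HasDerivWithinAt q (q' s) (Ioc B 0) s) ∧
      (∀ s ∈ Ioc B (0:ℝ), HasDerivWithinAt q'
        (F s * q s / 2 - δ ((q s) ^ 2) * (q s) ^ 2 * q' s) (Ioc B 0) s) ∧
      (∀ s ∈ Ioc B (0:ℝ), HasDerivWithinAt F (-4 * δ ((q s) ^ 2) * (q' s) ^ 2) (Ioc B 0) s) ∧
      (∀ s ∈ Ioc a (0:ℝ), q s = u s ∧ q' s = u' s ∧ F s = E s) := by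
  obtain ⟨M, M2, EM, hM0, hM20, hEM0, hM, hM2, hEbd⟩ :=
    aux_bounds δ hd0 Dstar hdD hD0 a ha0 u u' E hu hu' hE hman hfin
  have hub : ∀ s ∈ Ioc a (0:ℝ), |u s| ≤ Real.sqrt M := fun s hs => by
    rw [← Real.sqrt_sq_eq_abs]; exact Real.sqrt_le_sqrt (hM s hs)
  have hu'b : ∀ s ∈ Ioc a (0:ℝ), |u' s| ≤ Real.sqrt M2 := fun s hs => by
    rw [← Real.sqrt_sq_eq_abs]; exact Real.sqrt_le_sqrt (hM2 s hs)
  -- bounds for the derivatives of u' and E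
  have habs2 : ∀ s ∈ Ioc a (0:ℝ), |E s * u s / 2 - δ ((u s) ^ 2) * (u s) ^ 2 * u' s|
      ≤ EM * Real.sqrt M / 2 + Dstar * M * Real.sqrt M2 := by
    intro s hs
    have b1 : |E s * u s / 2| ≤ EM * Real.sqrt M / 2 := by
      rw [abs_div, abs_mul, abs_two]
      have := mul_le_mul (hEbd s hs) (hub s hs) (abs_nonneg _) hEM0
      linarith
    have b2 : |δ ((u s) ^ 2) * (u s) ^ 2 * u' s| ≤ Dstar * M * Real.sqrt M2 := by
      rw [abs_mul, abs_mul, abs_of_nonneg (hd0 (u s)), abs_of_nonneg (sq_nonneg (u s))]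
      have c1 : δ ((u s) ^ 2) * (u s) ^ 2 ≤ Dstar * M :=
        mul_le_mul (hdD (u s)) (hM s hs) (sq_nonneg _) hD0
      exact mul_le_mul c1 (hu'b s hs) (abs_nonneg _) (by positivity)
    calc |E s * u s / 2 - δ ((u s) ^ 2) * (u s) ^ 2 * u' s|
        ≤ |E s * u s / 2| + |δ ((u s) ^ 2) * (u s) ^ 2 * u' s| := by
          rw [sub_eq_add_neg]
          exact (abs_add_le _ _).trans (by rw [abs_neg])
      _ ≤ _ := add_le_add b1 b2
  have habs3 : ∀ s ∈ Ioc a (0:ℝ), |(-4) * δ ((u s) ^ 2) * (u' s) ^ 2| ≤ 4 * Dstar * M2 := by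
    intro s hs
    rw [abs_mul, abs_mul, abs_of_nonneg (hd0 (u s)), abs_of_nonneg (sq_nonneg (u' s))]
    have : |(-4:ℝ)| = 4 := by norm_num
    rw [this]
    have c1 : (4:ℝ) * δ ((u s) ^ 2) ≤ 4 * Dstar := by linarith [hdD (u s)]
    exact mul_le_mul c1 (hM2 s hs) (sq_nonneg _) (by positivity)
  -- limits at the left endpoint
  obtain ⟨L₁, htu⟩ := aux_tendsto ha0 hu (fun s hs => hu'b s hs)
  obtain ⟨L₂, htu'⟩ := aux_tendsto ha0 hu' (fun s hs => habs2 s hs)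
  obtain ⟨L₃, htE⟩ := aux_tendsto ha0 hE (fun s hs => habs3 s hs)
  have hδc : Continuous fun v : ℝ => δ (v ^ 2) := hsq.continuous
  have htδ : Tendsto (fun s => δ ((u s) ^ 2)) (𝓝[>] a) (𝓝 (δ (L₁ ^ 2))) :=
    (hδc.tendsto L₁).comp htu
  have hT2 : Tendsto (fun s => E s * u s / 2 - δ ((u s) ^ 2) * (u s) ^ 2 * u' s) (𝓝[>] a)
      (𝓝 (L₃ * L₁ / 2 - δ (L₁ ^ 2) * L₁ ^ 2 * L₂)) :=
    ((htE.mul htu).div_const 2).sub ((htδ.mul (htu.pow 2)).mul htu')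
  have hT3 : Tendsto (fun s => -4 * δ ((u s) ^ 2) * (u' s) ^ 2) (𝓝[>] a)
      (𝓝 (-4 * δ (L₁ ^ 2) * L₂ ^ 2)) :=
    (tendsto_const_nhds.mul htδ).mul (htu'.pow 2)
  -- the vector field
  set vf : ℝ × ℝ × ℝ → ℝ × ℝ × ℝ := fun y =>
    (y.2.1, y.2.2 * y.1 / 2 - δ (y.1 ^ 2) * y.1 ^ 2 * y.2.1, -4 * δ (y.1 ^ 2) * y.2.1 ^ 2)
    with hvfdef
  have hvf : ContDiff ℝ 1 vf := by
    have h1 : ContDiff ℝ 1 (fun y : ℝ × ℝ × ℝ => y.1) := contDiff_fst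
    have h2 : ContDiff ℝ 1 (fun y : ℝ × ℝ × ℝ => y.2.1) := contDiff_fst.comp contDiff_snd
    have h3 : ContDiff ℝ 1 (fun y : ℝ × ℝ × ℝ => y.2.2) := contDiff_snd.comp contDiff_snd
    have hδ1 : ContDiff ℝ 1 (fun y : ℝ × ℝ × ℝ => δ (y.1 ^ 2)) := hsq.comp contDiff_fst
    exact h2.prodMk ((((h3.mul h1).div_const 2).sub ((hδ1.mul (h1.pow 2)).mul h2)).prodMk
      ((contDiff_const.mul hδ1).mul (h2.pow 2)))
  obtain ⟨α, hα0, ε, hε, hαd⟩ :=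
    hvf.contDiffAt.exists_forall_mem_closedBall_exists_eq_forall_mem_Ioo_hasDerivAt₀ (x₀ := ((L₁, L₂, L₃) : ℝ × ℝ × ℝ)) a
  -- component derivatives
  have hα1 : ∀ t ∈ Ioo (a - ε) (a + ε), HasDerivAt (fun x => (α x).1) ((α t).2.1) t := by
    intro t ht
    exact (ContinuousLinearMap.hasFDerivAt
      (ContinuousLinearMap.fst ℝ ℝ (ℝ × ℝ))).comp_hasDerivAt t (hαd t ht)
  have hα2 : ∀ t ∈ Ioo (a - ε) (a + ε), HasDerivAt (fun x => (α x).2.1)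
      ((α t).2.2 * (α t).1 / 2 - δ ((α t).1 ^ 2) * (α t).1 ^ 2 * (α t).2.1) t := by
    intro t ht
    exact (ContinuousLinearMap.hasFDerivAt
      ((ContinuousLinearMap.fst ℝ ℝ ℝ).comp
        (ContinuousLinearMap.snd ℝ ℝ (ℝ × ℝ)))).comp_hasDerivAt t (hαd t ht)
  have hα3 : ∀ t ∈ Ioo (a - ε) (a + ε), HasDerivAt (fun x => (α x).2.2)
      (-4 * δ ((α t).1 ^ 2) * (α t).2.1 ^ 2) t := by
    intro t ht
    exact (ContinuousLinearMap.hasFDerivAt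
      ((ContinuousLinearMap.snd ℝ ℝ ℝ).comp
        (ContinuousLinearMap.snd ℝ ℝ (ℝ × ℝ)))).comp_hasDerivAt t (hαd t ht)
  -- glue
  set B : ℝ := a - ε / 2 with hBdef
  have hBa : B < a := by rw [hBdef]; linarith
  have hBe : a - ε < B := by rw [hBdef]; linarith
  have htf1 : Tendsto u (𝓝[>] a) (𝓝 ((α a).1)) := by rw [hα0]; exact htu
  have htg1 : Tendsto u' (𝓝[>] a) (𝓝 ((α a).2.1)) := by rw [hα0]; exact htu'
  have htg2 : Tendsto (fun s => E s * u s / 2 - δ ((u s) ^ 2) * (u s) ^ 2 * u' s) (𝓝[>] a)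
      (𝓝 ((α a).2.2 * (α a).1 / 2 - δ ((α a).1 ^ 2) * (α a).1 ^ 2 * (α a).2.1)) := by
    rw [hα0]; exact hT2
  have htf3 : Tendsto E (𝓝[>] a) (𝓝 ((α a).2.2)) := by rw [hα0]; exact htE
  have htg3 : Tendsto (fun s => -4 * δ ((u s) ^ 2) * (u' s) ^ 2) (𝓝[>] a)
      (𝓝 (-4 * δ ((α a).1 ^ 2) * (α a).2.1 ^ 2)) := by rw [hα0]; exact hT3
  have hglue1 := aux_glue ha0 hBa hBe hε hu hα1 htf1 htg1
  have hglue2 := aux_glue ha0 hBa hBe hε hu' hα2 htg1 htg2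
  have hglue3 := aux_glue ha0 hBa hBe hε hE hα3 htf3 htg3
  refine ⟨B, (fun x => if a < x then u x else (α x).1),
    (fun x => if a < x then u' x else (α x).2.1),
    (fun x => if a < x then E x else (α x).2.2), hBa, ?_, ?_, ?_, ?_⟩
  · exact hglue1
  · intro s hs
    have h := hglue2 s hs
    have e : (if a < s then E s * u s / 2 - δ ((u s) ^ 2) * (u s) ^ 2 * u' s
          else (α s).2.2 * (α s).1 / 2 - δ ((α s).1 ^ 2) * (α s).1 ^ 2 * (α s).2.1)
        = ((if a < s then E s else (α s).2.2) * (if a < s then u s else (α s).1) / 2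
          - δ ((if a < s then u s else (α s).1) ^ 2) * (if a < s then u s else (α s).1) ^ 2
            * (if a < s then u' s else (α s).2.1)) := by
      by_cases hc : a < s <;> simp [hc]
    rw [← e]
    exact h
  · intro s hs
    have h := hglue3 s hs
    have e : (if a < s then -4 * δ ((u s) ^ 2) * (u' s) ^ 2
          else -4 * δ ((α s).1 ^ 2) * (α s).2.1 ^ 2)
        = (-4 * δ ((if a < s then u s else (α s).1) ^ 2)
            * (if a < s then u' s else (α s).2.1) ^ 2) := by
      by_cases hc : a < s <;> simp [hc]
    rw [← e]
    exact h
  · intro s hs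
    exact ⟨if_pos hs.1, if_pos hs.1, if_pos hs.1⟩

/-- For a solution of the Levi-Civita system on the invariant manifold, maximal to
the left on `]A,0]` with `A ∈ [-∞,0[`, the physical time `∫ u²` diverges:
`∫_A^0 u(s)² ds = +∞`. -/
theorem stmt18 (δ δ' : ℝ → ℝ) (hδc : ContinuousOn δ (Ioi 0))
    (hδd : ∀ s > (0 : ℝ), HasDerivAt δ (δ' s) s) (hδ'c : ContinuousOn δ' (Ioi 0))
    (hδ0 : ∀ s > (0 : ℝ), 0 ≤ δ s) (Dstar : ℝ) (hδb : ∀ s > (0 : ℝ), δ s ≤ Dstar)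
    (hδ'0 : Tendsto (fun s => Real.sqrt s * δ' s) (nhdsWithin 0 (Ioi 0)) (nhds 0))
    (hsq : ContDiff ℝ 1 fun v : ℝ => δ (v ^ 2))
    (A : EReal) (hA : A < 0)
    (u u' E : ℝ → ℝ)
    (hsol : LCSolOn δ {s : ℝ | A < (s : EReal) ∧ s ≤ 0} u u' E)
    (hman : ∀ s ∈ {s : ℝ | A < (s : EReal) ∧ s ≤ 0}, 2 * (u' s) ^ 2 - E s * (u s) ^ 2 = 1)
    (hmax : ¬∃ (B : EReal) (q q' F : ℝ → ℝ), B < A ∧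
      LCSolOn δ {s : ℝ | B < (s : EReal) ∧ s ≤ 0} q q' F ∧
      ∀ s ∈ {s : ℝ | A < (s : EReal) ∧ s ≤ 0}, q s = u s ∧ q' s = u' s ∧ F s = E s) :
    ∫⁻ s in {s : ℝ | A < (s : EReal) ∧ s ≤ 0}, ENNReal.ofReal ((u s) ^ 2) = ⊤ := by
  classical
  have hdc : Continuous fun v : ℝ => δ (v ^ 2) := hsq.continuous
  have hd0 : ∀ v : ℝ, 0 ≤ δ (v ^ 2) := by
    intro v
    rcases eq_or_ne v 0 with rfl | hv
    · have h1 : Tendsto (fun w : ℝ => δ (w ^ 2)) (𝓝[≠] (0:ℝ)) (𝓝 (δ ((0:ℝ) ^ 2))) :=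
        (hdc.tendsto 0).mono_left nhdsWithin_le_nhds
      apply ge_of_tendsto h1
      filter_upwards [self_mem_nhdsWithin] with w hw
      have hw2 : (0:ℝ) < w ^ 2 :=
        lt_of_le_of_ne (sq_nonneg w) (Ne.symm (pow_ne_zero 2 hw))
      exact hδ0 _ hw2
    · exact hδ0 _ (lt_of_le_of_ne (sq_nonneg v) (Ne.symm (pow_ne_zero 2 hv)))
  have hdD : ∀ v : ℝ, δ (v ^ 2) ≤ Dstar := by
    intro v
    rcases eq_or_ne v 0 with rfl | hv
    · have h1 : Tendsto (fun w : ℝ => δ (w ^ 2)) (𝓝[≠] (0:ℝ)) (𝓝 (δ ((0:ℝ) ^ 2))) :=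
        (hdc.tendsto 0).mono_left nhdsWithin_le_nhds
      apply le_of_tendsto h1
      filter_upwards [self_mem_nhdsWithin] with w hw
      have hw2 : (0:ℝ) < w ^ 2 :=
        lt_of_le_of_ne (sq_nonneg w) (Ne.symm (pow_ne_zero 2 hw))
      exact hδb _ hw2
    · exact hδb _ (lt_of_le_of_ne (sq_nonneg v) (Ne.symm (pow_ne_zero 2 hv)))
  have hD0 : 0 ≤ Dstar := le_trans (hd0 1) (hdD 1)
  induction A using EReal.rec with
  | bot =>
    have hSeq : {s : ℝ | (⊥:EReal) < (s : EReal) ∧ s ≤ 0} = Iic (0:ℝ) := by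
      ext s; simp
    rw [hSeq] at hsol hman ⊢
    obtain ⟨h1, h2, h3⟩ := hsol
    by_contra hfin
    exact aux_bot δ hd0 hdc u u' E h1 h2 h3 hman hfin
  | coe a =>
    have ha0 : a < 0 := by exact_mod_cast hA
    have hSeq : {s : ℝ | (a:EReal) < (s : EReal) ∧ s ≤ 0} = Ioc a (0:ℝ) := by
      ext s
      simp only [mem_setOf_eq, mem_Ioc, EReal.coe_lt_coe_iff]
    rw [hSeq] at hsol hman ⊢
    obtain ⟨h1, h2, h3⟩ := hsol
    by_contra hfin
    obtain ⟨B, q, q', F, hBa, hb1, hb2, hb3, hagree⟩ :=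
      aux_real δ hd0 Dstar hdD hD0 hsq a ha0 u u' E h1 h2 h3 hman hfin
    apply hmax
    refine ⟨(B : EReal), q, q', F, by exact_mod_cast hBa, ?_, ?_⟩
    · have hSeq' : {s : ℝ | (B:EReal) < (s : EReal) ∧ s ≤ 0} = Ioc B (0:ℝ) := by
        ext s
        simp only [mem_setOf_eq, mem_Ioc, EReal.coe_lt_coe_iff]
      rw [hSeq']
      exact ⟨hb1, hb2, hb3⟩
    · rw [hSeq]
      exact hagree
  | top => exact absurd hA (by simp)
end

section
/- Let x : ]α,0] → ℂ\{0} be a solution of the damped Kepler equation ẍ + D(x)ẋ = -x/|x|³ with D : ℂ\{0} → ℝ continuous such that w ↦ D(w²) is C¹ on ℂ. Choose w₀ ∈ ℂ with w₀² = x(0), and let z : ]α,0] → ℂ\{0} be the continuous lifting with z(0) = w₀ and z(t)² = x(t). Define s(t) = ∫_0^t dτ/|x(τ)| and the energy h(t) = |ẋ(t)|²/2 - 1/|x(t)| along the solution, and set w(s(t)) = z(t), E(s(t)) = h(t). Then (w,E) solves w'' + D(w²)|w|²w' = Ew/2, E' = -4D(w²)|w'|², and stays on the manifold 2|w'|² -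 E|w|² = 1. -/
open Set Filter Function Topology
open scoped RealInnerProductSpace

-- continuity of invFunOn for strictly monotone continuous functions
lemma invFunOn_continuousOn {S : Set ℝ} [hSc : OrdConnected S] {f : ℝ → ℝ}
    (hmono : StrictMonoOn f S) (hfc : ContinuousOn f S) :
    ContinuousOn (invFunOn f S) (f '' S) := by
  have hT : OrdConnected (f '' S) :=
    ((hSc.isPreconnected).image f hfc).ordConnected
  haveI := hT
  set e := StrictMonoOn.orderIso f S hmono with he
  have hcont : Continuous (Subtype.val ∘ e.symm) := continuous_subtype_val.comp e.symm.continuous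
  rw [continuousOn_iff_continuous_restrict]
  convert hcont using 1
  funext p
  have hco : ∀ q : S, (e q : ℝ) = f q := fun q => rfl
  have hp : f ((e.symm p : S) : ℝ) = (p : ℝ) := by
    conv_rhs => rw [← e.apply_symm_apply p]
    exact (hco _).symm
  have hmem : ((e.symm p : S) : ℝ) ∈ S := (e.symm p).2
  simp only [restrict_apply, Function.comp_apply]
  rw [← hp]
  exact hmono.injOn.leftInvOn_invFunOn hmem

lemma hasDerivWithinAt_comp_inv {F : Type*} [NormedAddCommGroup F] [NormedSpace ℝ F]
    {S : Set ℝ} [hSc : OrdConnected S] {f : ℝ → ℝ} {g h : ℝ → F} {t₀ : ℝ} {c : ℝ} {d : F}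
    (hmono : StrictMonoOn f S) (hfc : ContinuousOn f S)
    (ht₀ : t₀ ∈ S) (hf : HasDerivWithinAt f c S t₀) (hc : c ≠ 0)
    (hg : HasDerivWithinAt g d S t₀)
    (hcomp : ∀ t ∈ S, h (f t) = g t) :
    HasDerivWithinAt h (c⁻¹ • d) (f '' S) (f t₀) := by
  set σ := invFunOn f S with hσdef
  have hσleft : ∀ t ∈ S, σ (f t) = t := fun t ht => hmono.injOn.leftInvOn_invFunOn ht
  have hσmem : ∀ u ∈ f '' S, σ u ∈ S := fun u hu => invFunOn_mem (by
    obtain ⟨t, ht, rfl⟩ := hu; exact ⟨t, ht, rfl⟩)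
  have hσright : ∀ u ∈ f '' S, f (σ u) = u := fun u hu => by
    obtain ⟨t, ht, rfl⟩ := hu; rw [hσleft t ht]
  have hσc : ContinuousOn σ (f '' S) := invFunOn_continuousOn hmono hfc
  -- tendsto of σ on punctured filter
  have hσt : Tendsto σ (𝓝[(f '' S) \ {f t₀}] (f t₀)) (𝓝[S \ {t₀}] t₀) := by
    rw [tendsto_nhdsWithin_iff]
    constructor
    · have hcw : Tendsto σ (𝓝[(f '' S) \ {f t₀}] (f t₀)) (𝓝 (σ (f t₀))) :=
        (hσc (f t₀) (mem_image_of_mem f ht₀)).mono diff_subset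
      rwa [hσleft t₀ ht₀] at hcw
    · filter_upwards [self_mem_nhdsWithin] with u hu
      refine ⟨hσmem u hu.1, ?_⟩
      intro h'
      apply hu.2
      rw [mem_singleton_iff] at h' ⊢
      rw [← hσright u hu.1, h']
  rw [hasDerivWithinAt_iff_tendsto_slope]
  have hfs : Tendsto (slope f t₀) (𝓝[S \ {t₀}] t₀) (𝓝 c) :=
    hasDerivWithinAt_iff_tendsto_slope.mp hf
  have hgs : Tendsto (slope g t₀) (𝓝[S \ {t₀}] t₀) (𝓝 d) :=
    hasDerivWithinAt_iff_tendsto_slope.mp hg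
  have hF : Tendsto (fun t => (slope f t₀ t)⁻¹ • slope g t₀ t) (𝓝[S \ {t₀}] t₀)
      (𝓝 (c⁻¹ • d)) := (hfs.inv₀ hc).smul hgs
  have hcomp' : Tendsto ((fun t => (slope f t₀ t)⁻¹ • slope g t₀ t) ∘ σ)
      (𝓝[(f '' S) \ {f t₀}] (f t₀)) (𝓝 (c⁻¹ • d)) := hF.comp hσt
  refine hcomp'.congr' ?_
  filter_upwards [self_mem_nhdsWithin] with u hu
  obtain ⟨humem, hune⟩ := hu
  have htS : σ u ∈ S := hσmem u humem
  have htne : σ u ≠ t₀ := fun h' => hune (by rw [mem_singleton_iff, ← hσright u humem, h'])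
  have hsub : (σ u : ℝ) - t₀ ≠ 0 := sub_ne_zero.2 htne
  have hfne : f (σ u) - f t₀ ≠ 0 := sub_ne_zero.2 (fun h' =>
    htne (hmono.injOn htS ht₀ h'))
  have h1 : h u = g (σ u) := by
    have h1' := hcomp (σ u) htS
    rwa [hσright u humem] at h1'
  have h2 : h (f t₀) = g t₀ := hcomp _ ht₀
  have h3 : u - f t₀ = f (σ u) - f t₀ := by rw [hσright u humem]
  simp only [Function.comp_apply, slope_def_module]
  rw [h1, h2, h3, smul_smul]
  congr 1
  simp only [smul_eq_mul, mul_inv, inv_inv]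
  field_simp

lemma z_hasDeriv {S : Set ℝ} {x x' z : ℝ → ℂ} {t₀ : ℝ}
    (hzc : ContinuousOn z S) (hz : ∀ t ∈ S, z t ^ 2 = x t)
    (hz0 : z t₀ ≠ 0) (ht₀ : t₀ ∈ S)
    (hx : HasDerivWithinAt x (x' t₀) S t₀) :
    HasDerivWithinAt z (x' t₀ / (2 * z t₀)) S t₀ := by
  rw [hasDerivWithinAt_iff_tendsto_slope]
  have hxs : Tendsto (slope x t₀) (𝓝[S \ {t₀}] t₀) (𝓝 (x' t₀)) :=
    hasDerivWithinAt_iff_tendsto_slope.mp hx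
  have hden : Tendsto (fun u => z u + z t₀) (𝓝[S \ {t₀}] t₀) (𝓝 (z t₀ + z t₀)) :=
    (((hzc t₀ ht₀).mono diff_subset).tendsto).add tendsto_const_nhds
  have hne : z t₀ + z t₀ ≠ 0 := by
    intro h; apply hz0; have : (2:ℂ) * z t₀ = 0 := by rw [two_mul]; exact h
    simpa using this
  have hq : Tendsto (fun u => slope x t₀ u / (z u + z t₀)) (𝓝[S \ {t₀}] t₀)
      (𝓝 (x' t₀ / (z t₀ + z t₀))) := hxs.div hden hne
  have hval : x' t₀ / (z t₀ + z t₀) = x' t₀ / (2 * z t₀) := by rw [two_mul]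
  rw [← hval]
  refine hq.congr' ?_
  filter_upwards [self_mem_nhdsWithin, hden.eventually_ne hne] with u hu hne'
  simp only [slope_def_module]
  rw [← hz u hu.1, ← hz t₀ ht₀, smul_div_assoc]
  congr 1
  field_simp
  ring


/-- Solutions of the damped planar Kepler equation `ẍ + D(x)ẋ = -x/|x|³`,
identifying `ℝ²` with `ℂ`. -/
def KeplerSolOn (D : ℂ → ℝ) (S : Set ℝ) (x x' : ℝ → ℂ) : Prop :=
  (∀ t ∈ S, x t ≠ 0) ∧
  (∀ t ∈ S, HasDerivWithinAt x (x' t) S t) ∧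
  (∀ t ∈ S, HasDerivWithinAt x' (-(D (x t)) • x' t - (‖x t‖ ^ 3)⁻¹ • x t) S t)

set_option maxHeartbeats 1600000 in
/-- Levi-Civita regularization of the planar damped Kepler equation: if `z` is the
continuous lifting with `z² = x`, `z(0) = w₀`, and `w, E` are defined along the new
time `s(t) = ∫_0^t dτ/|x(τ)|` by `w(s(t)) = z(t)`, `E(s(t)) = |ẋ(t)|²/2 - 1/|x(t)|`,
then `(w,E)` solves `w'' + D(w²)|w|²w' = Ew/2`, `E' = -4D(w²)|w'|²` and stays on
the manifold `2|w'|² - E|w|² = 1`. -/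
theorem stmt19 (α : ℝ) (hα : α < 0)
    (D : ℂ → ℝ) (hDc : ContinuousOn D {z : ℂ | z ≠ 0})
    (hDsq : ContDiff ℝ 1 fun w : ℂ => D (w ^ 2))
    (x x' : ℝ → ℂ) (hsol : KeplerSolOn D (Ioc α 0) x x')
    (w₀ : ℂ) (hw₀ : w₀ ^ 2 = x 0)
    (z : ℝ → ℂ) (hzc : ContinuousOn z (Ioc α 0)) (hz0 : z 0 = w₀)
    (hz : ∀ t ∈ Ioc α 0, (z t) ^ 2 = x t)
    (w : ℝ → ℂ) (E : ℝ → ℝ)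
    (hw : ∀ t ∈ Ioc α 0, w (∫ τ in (0:ℝ)..t, 1 / ‖x τ‖) = z t)
    (hE : ∀ t ∈ Ioc α 0, E (∫ τ in (0:ℝ)..t, 1 / ‖x τ‖) = ‖x' t‖ ^ 2 / 2 - 1 / ‖x t‖) :
    ∃ w' : ℝ → ℂ,
      (∀ s ∈ (fun t => ∫ τ in (0:ℝ)..t, 1 / ‖x τ‖) '' Ioc α 0,
        HasDerivWithinAt w (w' s)
          ((fun t => ∫ τ in (0:ℝ)..t, 1 / ‖x τ‖) '' Ioc α 0) s) ∧
      (∀ s ∈ (fun t => ∫ τ in (0:ℝ)..t, 1 / ‖x τ‖) '' Ioc α 0,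
        HasDerivWithinAt w' ((E s / 2) • w s - (D ((w s) ^ 2) * ‖w s‖ ^ 2) • w' s)
          ((fun t => ∫ τ in (0:ℝ)..t, 1 / ‖x τ‖) '' Ioc α 0) s) ∧
      (∀ s ∈ (fun t => ∫ τ in (0:ℝ)..t, 1 / ‖x τ‖) '' Ioc α 0,
        HasDerivWithinAt E (-4 * D ((w s) ^ 2) * ‖w' s‖ ^ 2)
          ((fun t => ∫ τ in (0:ℝ)..t, 1 / ‖x τ‖) '' Ioc α 0) s) ∧
      (∀ s ∈ (fun t => ∫ τ in (0:ℝ)..t, 1 / ‖x τ‖) '' Ioc α 0,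
        2 * ‖w' s‖ ^ 2 - E s * ‖w s‖ ^ 2 = 1) := by
  obtain ⟨hx0, hx'd, hx''d⟩ := hsol
  set S : Set ℝ := Ioc α 0 with hSdef
  set sf : ℝ → ℝ := fun t => ∫ τ in (0:ℝ)..t, 1 / ‖x τ‖ with hsfdef
  haveI : OrdConnected S := ordConnected_Ioc
  have h0S : (0:ℝ) ∈ S := ⟨hα, le_refl 0⟩
  have hxc : ContinuousOn x S := fun t ht => (hx'd t ht).continuousWithinAt
  have hx'c : ContinuousOn x' S := fun t ht => (hx''d t ht).continuousWithinAt
  have hnpos : ∀ t ∈ S, 0 < ‖x t‖ := fun t ht => norm_pos_iff.mpr (hx0 t ht)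
  have hz0' : ∀ t ∈ S, z t ≠ 0 := fun t ht => by
    intro h; exact hx0 t ht (by rw [← hz t ht, h]; ring)
  have hfc : ContinuousOn (fun τ => 1 / ‖x τ‖) S :=
    continuousOn_const.div hxc.norm fun t ht => (hnpos t ht).ne'
  have hmeasS : MeasurableSet S := measurableSet_Ioc
  have hint : ∀ t ∈ S, IntervalIntegrable (fun τ => 1 / ‖x τ‖) MeasureTheory.volume 0 t := by
    intro t ht
    apply ContinuousOn.intervalIntegrable
    apply hfc.mono
    rw [uIcc_of_ge ht.2]
    exact fun u hu => ⟨lt_of_lt_of_le ht.1 hu.1, hu.2⟩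
  have hsfd : ∀ t ∈ S, HasDerivWithinAt sf (1 / ‖x t‖) S t := by
    intro t ht
    rcases eq_or_lt_of_le ht.2 with h0 | hlt
    · subst h0
      have hfil : 𝓝[Iic (0:ℝ)] (0:ℝ) = 𝓝[S] (0:ℝ) := by
        rw [nhdsWithin_restrict' (Iic 0) (Ioi_mem_nhds hα), inter_comm, Ioi_inter_Iic]
      have hms : StronglyMeasurableAtFilter (fun τ => 1 / ‖x τ‖) (𝓝[Iic (0:ℝ)] (0:ℝ))
          MeasureTheory.volume := ⟨S, by rw [hfil]; exact self_mem_nhdsWithin,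
        hfc.aestronglyMeasurable hmeasS⟩
      have hct : ContinuousWithinAt (fun τ => 1 / ‖x τ‖) (Iic (0:ℝ)) 0 := by
        show Tendsto _ _ _
        rw [hfil]
        exact hfc 0 ht
      have h1 : HasDerivWithinAt sf (1 / ‖x 0‖) (Iic (0:ℝ)) 0 :=
        intervalIntegral.integral_hasDerivWithinAt_right (hint 0 ht) hms hct
      exact h1.mono Ioc_subset_Iic_self
    · have hmem : S ∈ 𝓝 t := Ioc_mem_nhds ht.1 hlt
      have h1 : HasDerivAt sf (1 / ‖x t‖) t :=
        intervalIntegral.integral_hasDerivAt_right (hint t ht)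
          ⟨S, hmem, hfc.aestronglyMeasurable hmeasS⟩ (hfc.continuousAt hmem)
      exact h1.hasDerivWithinAt
  have hsfc : ContinuousOn sf S := fun t ht => (hsfd t ht).continuousWithinAt
  have hsfmono : StrictMonoOn sf S := by
    apply strictMonoOn_of_deriv_pos (convex_Ioc α 0) (by rw [hSdef] at hsfc; exact hsfc)
    intro t ht
    rw [interior_Ioc] at ht
    have htS : t ∈ S := ⟨ht.1, ht.2.le⟩
    have hd : HasDerivAt sf (1 / ‖x t‖) t :=
      (hsfd t htS).hasDerivAt (by rw [hSdef]; exact Ioc_mem_nhds ht.1 ht.2)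
    rw [hd.deriv]
    exact div_pos one_pos (hnpos t htS)
  have hzd : ∀ t ∈ S, HasDerivWithinAt z (x' t / (2 * z t)) S t := fun t ht =>
    z_hasDeriv hzc hz (hz0' t ht) ht (hx'd t ht)
  have hrd : ∀ t ∈ S, HasDerivWithinAt (fun τ => ‖x τ‖) (⟪x t, x' t⟫ / ‖x t‖) S t := by
    intro t ht
    have h1 : HasDerivWithinAt (fun τ => ‖x τ‖ ^ 2) (2 * ⟪x t, x' t⟫) S t :=
      (hx'd t ht).norm_sq
    have h2 := h1.sqrt (by have := hnpos t ht; positivity)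
    have heq : (fun τ => Real.sqrt (‖x τ‖ ^ 2)) = fun τ => ‖x τ‖ :=
      funext fun τ => Real.sqrt_sq (norm_nonneg _)
    rw [heq] at h2
    convert h2 using 1
    rw [Real.sqrt_sq (norm_nonneg _)]
    field_simp
  set σf := invFunOn sf S with hσdef
  have hσleft : ∀ t ∈ S, σf (sf t) = t := fun t ht => hsfmono.injOn.leftInvOn_invFunOn ht
  set W : ℝ → ℂ := fun u => ‖x (σf u)‖ • (x' (σf u) / (2 * z (σf u))) with hWdef
  have hsne : ∀ t ∈ S, (1 / ‖x t‖ : ℝ) ≠ 0 := fun t ht => by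
    have := hnpos t ht; positivity
  have hWval : ∀ t ∈ S, W (sf t) = ‖x t‖ • (x' t / (2 * z t)) := fun t ht => by
    simp only [hWdef, hσleft t ht]
  refine ⟨W, ?_, ?_, ?_, ?_⟩
  · rintro s ⟨t₀, ht₀, rfl⟩
    have key := hasDerivWithinAt_comp_inv hsfmono hsfc ht₀ (hsfd t₀ ht₀)
      (hsne t₀ ht₀) (hzd t₀ ht₀) hw
    refine key.congr_deriv (Eq.symm ?_)
    rw [hWval t₀ ht₀, one_div, inv_inv]
  · rintro s ⟨t₀, ht₀, rfl⟩
    have h2z : (2 : ℂ) * z t₀ ≠ 0 := by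
      simp [hz0' t₀ ht₀]
    have hden : HasDerivWithinAt (fun t => (2:ℂ) * z t) (2 * (x' t₀ / (2 * z t₀))) S t₀ :=
      (hzd t₀ ht₀).const_mul 2
    have hq : HasDerivWithinAt (fun t => x' t / (2 * z t))
        (((-(D (x t₀)) • x' t₀ - (‖x t₀‖ ^ 3)⁻¹ • x t₀) * (2 * z t₀) -
          x' t₀ * (2 * (x' t₀ / (2 * z t₀)))) / (2 * z t₀) ^ 2) S t₀ :=
      (hx''d t₀ ht₀).div hden h2z
    have hg : HasDerivWithinAt (fun t => ‖x t‖ • (x' t / (2 * z t)))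
        (‖x t₀‖ • (((-(D (x t₀)) • x' t₀ - (‖x t₀‖ ^ 3)⁻¹ • x t₀) * (2 * z t₀) -
          x' t₀ * (2 * (x' t₀ / (2 * z t₀)))) / (2 * z t₀) ^ 2) +
          (⟪x t₀, x' t₀⟫ / ‖x t₀‖) • (x' t₀ / (2 * z t₀))) S t₀ :=
      (hrd t₀ ht₀).smul hq
    have key := hasDerivWithinAt_comp_inv hsfmono hsfc ht₀ (hsfd t₀ ht₀)
      (hsne t₀ ht₀) hg hWval
    refine key.congr_deriv (Eq.symm ?_)
    rw [hw t₀ ht₀, hE t₀ ht₀, hWval t₀ ht₀]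
    have hζ : z t₀ ≠ 0 := hz0' t₀ ht₀
    simp only [← hz t₀ ht₀]
    have hM : ((‖z t₀ ^ 2‖ : ℝ) : ℂ) ≠ 0 := by
      simp only [ne_eq, Complex.ofReal_eq_zero, norm_eq_zero, pow_eq_zero_iff]
      simp [hζ]
    have hγ : (starRingEnd ℂ) (z t₀) = ((‖z t₀ ^ 2‖ : ℝ) : ℂ) / z t₀ := by
      rw [eq_div_iff hζ, mul_comm, Complex.mul_conj]
      norm_cast
      rw [norm_pow, Complex.normSq_eq_norm_sq]
    have hB' : ((‖z t₀‖ : ℝ) : ℂ) ^ 2 = ((‖z t₀ ^ 2‖ : ℝ) : ℂ) := by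
      norm_cast
      rw [norm_pow]
    have hC : ((‖x' t₀‖ : ℝ) : ℂ) ^ 2 = x' t₀ * (starRingEnd ℂ) (x' t₀) := by
      rw [Complex.mul_conj]
      norm_cast
      rw [Complex.normSq_eq_norm_sq]
    have hre : ∀ c : ℂ, ((c.re : ℝ) : ℂ) = (c + (starRingEnd ℂ) c) / 2 := fun c => by
      rw [eq_div_iff (by norm_num : (2:ℂ) ≠ 0), Complex.add_conj]
      push_cast
      ring
    have hD2 : ((⟪z t₀ ^ 2, x' t₀⟫ : ℝ) : ℂ) =
        ((starRingEnd ℂ) (z t₀) ^ 2 * x' t₀ + z t₀ ^ 2 * (starRingEnd ℂ) (x' t₀)) / 2 := by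
      rw [Complex.inner, hre]
      simp only [map_mul, map_pow, Complex.conj_conj]
      ring
    simp only [Complex.real_smul]
    push_cast
    rw [hB', hC, hD2, hγ]
    have habs : ((‖z t₀‖ : ℝ) : ℂ) ≠ 0 := by
      simp [hζ]
    field_simp [hζ, hM]
    ring_nf
  · rintro s ⟨t₀, ht₀, rfl⟩
    have hgE : HasDerivWithinAt (fun t => ‖x' t‖ ^ 2 / 2 - 1 / ‖x t‖)
        (2 * ⟪x' t₀, -(D (x t₀)) • x' t₀ - (‖x t₀‖ ^ 3)⁻¹ • x t₀⟫ / 2 -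
          -(⟪x t₀, x' t₀⟫ / ‖x t₀‖) / ‖x t₀‖ ^ 2) S t₀ := by
      have h1 : HasDerivWithinAt (fun t => ‖x' t‖ ^ 2 / 2)
          (2 * ⟪x' t₀, -(D (x t₀)) • x' t₀ - (‖x t₀‖ ^ 3)⁻¹ • x t₀⟫ / 2) S t₀ :=
        ((hx''d t₀ ht₀).norm_sq).div_const 2
      have h2 : HasDerivWithinAt (fun t => 1 / ‖x t‖)
          (-(⟪x t₀, x' t₀⟫ / ‖x t₀‖) / ‖x t₀‖ ^ 2) S t₀ := by
        simp only [one_div]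
        exact (hrd t₀ ht₀).inv (hnpos t₀ ht₀).ne'
      exact h1.sub h2
    have key := hasDerivWithinAt_comp_inv hsfmono hsfc ht₀ (hsfd t₀ ht₀)
      (hsne t₀ ht₀) hgE hE
    refine key.congr_deriv (Eq.symm ?_)
    rw [hw t₀ ht₀, hWval t₀ ht₀]
    have hζ : z t₀ ≠ 0 := hz0' t₀ ht₀
    have hmne : ‖z t₀‖ ≠ 0 := norm_ne_zero_iff.mpr hζ
    have hnv2 : ‖x t₀‖ = ‖z t₀‖ ^ 2 := by rw [← hz t₀ ht₀, norm_pow]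
    simp only [← hz t₀ ht₀]
    rw [inner_sub_right, real_inner_smul_right, real_inner_smul_right,
      real_inner_self_eq_norm_sq, real_inner_comm (x' t₀) (z t₀ ^ 2)]
    rw [norm_smul, norm_div, norm_mul, Real.norm_eq_abs, Complex.norm_ofNat,
      abs_of_pos (by rw [hz t₀ ht₀]; exact hnpos t₀ ht₀), norm_pow]
    have habs : ‖z t₀‖ ≠ 0 := norm_ne_zero_iff.mpr hζ
    field_simp [habs]
    have h86 : ‖z t₀‖ ^ 8 * ‖z t₀‖⁻¹ ^ 6 = ‖z t₀‖ ^ 2 := by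
      rw [inv_pow, ← div_eq_mul_inv, div_eq_iff (pow_ne_zero 6 habs)]; ring
    linear_combination (D (z t₀ ^ 2) * ‖x' t₀‖ ^ 2 * 4) * h86
  · rintro s ⟨t₀, ht₀, rfl⟩
    rw [hE t₀ ht₀, hw t₀ ht₀, hWval t₀ ht₀]
    have hζ : z t₀ ≠ 0 := hz0' t₀ ht₀
    have hmne : ‖z t₀‖ ≠ 0 := norm_ne_zero_iff.mpr hζ
    simp only [← hz t₀ ht₀]
    rw [norm_smul, norm_div, norm_mul, Real.norm_eq_abs, Complex.norm_ofNat,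
      abs_of_pos (by rw [hz t₀ ht₀]; exact hnpos t₀ ht₀), norm_pow]
    have habs : ‖z t₀‖ ≠ 0 := norm_ne_zero_iff.mpr hζ
    field_simp [habs]
    ring
end
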